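/- arXiv:1712.08311 — 3 statements merged into one kernel-verified Lean document; each statement's English description precedes it below -/
import Mathlib

section
/- Let w ∈ 𝔖_{n+1}. For each descent d of w set a_d = w(d), b_d = w(d+1), X_d = w({d+1,…,n+1}) and R_d = ({b_d, b_d+1, …, a_d−1} ∩ X_d) ∪ {a_d+1, a_d+2, …, n+1}, and let w_d ∈ 𝔖_{n+1} be the unique permutation which is strictly increasing on {1,…,n+1−#R_d} and strictly increasing on {n+2−#R_d,…,n+1} and maps {n+2−#R_d,…,n+1} onto R_d. Then each w_d is join-irreducible, and the set {w_d : d a descent of w} is the canonical join representation of w in the right weak order on 𝔖_{n+1}. -/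
/-- The inversion set of `w ∈ 𝔖_{n+1}`. -/
def invSetA (n : ℕ) (w : Equiv.Perm (Fin (n + 1))) : Set (Fin (n + 1) × Fin (n + 1)) :=
  {p | p.2 < p.1 ∧ w.symm p.1 < w.symm p.2}

/-- The right weak order on `𝔖_{n+1}`: `u ≤ w` iff `inv(u) ⊆ inv(w)`. -/
def weakLEA (n : ℕ) (u w : Equiv.Perm (Fin (n + 1))) : Prop :=
  invSetA n u ⊆ invSetA n w

/-- `w` is a least upper bound of `S` in the right weak order on `𝔖_{n+1}`. -/
def IsWeakLUBA (n : ℕ) (S : Set (Equiv.Perm (Fin (n + 1)))) (w : Equiv.Perm (Fin (n + 1))) :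
    Prop :=
  (∀ x ∈ S, weakLEA n x w) ∧ ∀ z, (∀ x ∈ S, weakLEA n x z) → weakLEA n w z

/-- `w` is join-irreducible in the right weak order on `𝔖_{n+1}`. -/
def IsJoinIrreducibleA (n : ℕ) (w : Equiv.Perm (Fin (n + 1))) : Prop :=
  w ≠ 1 ∧ ∀ u v, IsWeakLUBA n {u, v} w → u = w ∨ v = w

/-- `d` is a descent of `w ∈ 𝔖_{n+1}`: `w(d) > w(d+1)`. -/
def IsDescentA (n : ℕ) (w : Equiv.Perm (Fin (n + 1))) (d : Fin n) : Prop :=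
  w d.succ < w d.castSucc

/-- `U` is the canonical join representation of `w` in the right weak order on `𝔖_{n+1}`. -/
def IsCanonicalJoinRepA (n : ℕ) (w : Equiv.Perm (Fin (n + 1)))
    (U : Set (Equiv.Perm (Fin (n + 1)))) : Prop :=
  U.Finite ∧ IsWeakLUBA n U w ∧ (∀ U' ⊂ U, ¬ IsWeakLUBA n U' w) ∧
    ∀ V, V.Finite → IsWeakLUBA n V w → (∀ V' ⊂ V, ¬ IsWeakLUBA n V' w) →
      ∀ u ∈ U, ∃ v ∈ V, weakLEA n u v

/-- The set `R_d = ([b_d, a_d−1] ∩ X_d) ∪ [a_d+1, n+1]`, where `a_d = w(d)`, `b_d = w(d+1)`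
and `X_d = w({d+1,…,n+1})` (everything written 0-indexed). -/
def RsetA (n : ℕ) (w : Equiv.Perm (Fin (n + 1))) (d : Fin n) : Set (Fin (n + 1)) :=
  ({v | w d.succ ≤ v ∧ v < w d.castSucc} ∩ ⇑w '' {j | (d : ℕ) < (j : ℕ)}) ∪
    {v | w d.castSucc < v}

/-- `u` is the permutation `w_d`: strictly increasing on the first `n+1−#R_d` positions and on
the remaining positions, mapping the latter block onto `R_d`. -/
def IsWdA (n : ℕ) (w : Equiv.Perm (Fin (n + 1))) (d : Fin n)
    (u : Equiv.Perm (Fin (n + 1))) : Prop :=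
  StrictMonoOn ⇑u {p : Fin (n + 1) | (p : ℕ) < n + 1 - (RsetA n w d).ncard} ∧
  StrictMonoOn ⇑u {p : Fin (n + 1) | n + 1 - (RsetA n w d).ncard ≤ (p : ℕ)} ∧
  ⇑u '' {p : Fin (n + 1) | n + 1 - (RsetA n w d).ncard ≤ (p : ℕ)} = RsetA n w d

/-! The inversion set of `w_d` is the set of pairs `b < a` with `b_d ≤ b`, `a ≤ a_d` and
`w⁻¹ a ≤ d < w⁻¹ b`. Hence it lies in `inv w`, contains `(a_d, b_d)`, is contained in every
inversion set below `w` that contains `(a_d, b_d)`, and `(a_d, b_d)` sits at adjacent positions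
of `w_d`. Every inversion of `w` lies in some `inv w_d` or splits through an intermediate value
into two shorter inversions, so `w` is the join of the `w_d`. Finally, if `σ` is the join of `V`
and `σ` has a descent at `i`, some element of `V` inverts `(σ i, σ (i + 1))`, for otherwise
`σ * s_i` would be a smaller upper bound; applied to `w` and to `w_d` this gives the minimality,
the refinement property and the join-irreducibility. -/

open Equiv

section

variable {n : ℕ}

theorem invSetA_injective : Function.Injective (invSetA n) := by
  intro u v h
  have hmono : StrictMono (u.symm ∘ v) := by
    intro x y hxy
    have hne : u.symm (v x) ≠ u.symm (v y) := by simpa using hxy.ne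
    refine hne.lt_or_gt.resolve_right fun hgt => ?_
    rcases (v.injective.ne hxy.ne).lt_or_gt with hv | hv
    · have : (v y, v x) ∈ invSetA n v := h ▸ ⟨hv, hgt⟩
      exact this.2.not_gt (by simpa using hxy)
    · have : (v x, v y) ∈ invSetA n u := h.symm ▸ ⟨hv, by simpa using hxy⟩
      exact this.2.not_gt hgt
  ext x
  exact congrArg Fin.val (u.symm_apply_eq.1 (congrFun hmono.eq_id x)).symm

theorem invSetA_one : invSetA n 1 = ∅ :=
  Set.eq_empty_of_forall_notMem fun _ h => h.1.not_gt h.2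

theorem invSetA_trans {z : Perm (Fin (n + 1))} {a b c : Fin (n + 1)}
    (hac : (a, c) ∈ invSetA n z) (hcb : (c, b) ∈ invSetA n z) : (a, b) ∈ invSetA n z :=
  ⟨hcb.1.trans hac.1, hac.2.trans hcb.2⟩

theorem symm_lt_symm_of_notMem_invSetA {z : Perm (Fin (n + 1))} {a b : Fin (n + 1)}
    (hba : b < a) (h : (a, b) ∉ invSetA n z) : z.symm b < z.symm a :=
  (not_lt.1 fun hlt => h ⟨hba, hlt⟩).lt_of_ne (by simpa using hba.ne)

theorem swap_apply_lt_swap_apply_iff {i j p q : Fin (n + 1)} (hij : (j : ℕ) = i + 1)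
    (hpq : ¬(p = i ∧ q = j)) (hqp : ¬(p = j ∧ q = i)) :
    swap i j p < swap i j q ↔ p < q := by
  simp only [swap_apply_def, Fin.lt_def, Fin.ext_iff] at *
  split_ifs <;> omega

theorem invSetA_mul_swap {σ : Perm (Fin (n + 1))} {i j : Fin (n + 1)} (hij : (j : ℕ) = i + 1)
    (hdesc : σ j < σ i) : invSetA n (σ * swap i j) = invSetA n σ \ {(σ i, σ j)} := by
  ext ⟨a, b⟩
  obtain ⟨p, rfl⟩ := σ.surjective a
  obtain ⟨q, rfl⟩ := σ.surjective b
  simp only [invSetA, Perm.mul_def, symm_trans_apply, symm_swap, symm_apply_apply,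
    Set.mem_sdiff, Set.mem_ofPred_eq, Set.mem_singleton_iff, Prod.mk.injEq, σ.injective.eq_iff]
  by_cases hpq : p = i ∧ q = j
  · obtain ⟨rfl, rfl⟩ := hpq
    simp only [swap_apply_left, swap_apply_right, and_self, not_true_eq_false, and_false,
      iff_false, not_and, Fin.lt_def]
    omega
  by_cases hqp : p = j ∧ q = i
  · obtain ⟨rfl, rfl⟩ := hqp
    simp [hdesc.not_gt]
  rw [swap_apply_lt_swap_apply_iff hij hpq hqp]
  tauto

theorem IsWeakLUBA.exists_mem_invSetA {V : Set (Perm (Fin (n + 1)))} {σ : Perm (Fin (n + 1))}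
    (hσ : IsWeakLUBA n V σ) {i j : Fin (n + 1)} (hij : (j : ℕ) = i + 1) (hdesc : σ j < σ i) :
    ∃ v ∈ V, (σ i, σ j) ∈ invSetA n v := by
  by_contra! hV
  have hle : weakLEA n σ (σ * swap i j) := hσ.2 _ fun v hv => by
    rw [weakLEA, invSetA_mul_swap hij hdesc]
    exact Set.subset_sdiff_singleton (hσ.1 v hv) (hV v hv)
  have hmem : (σ i, σ j) ∈ invSetA n σ := ⟨hdesc, by simp [Fin.lt_def, hij]⟩
  rw [weakLEA, invSetA_mul_swap hij hdesc] at hle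
  exact (hle hmem).2 rfl

theorem invSetA_eq_of_strictMonoOn {k : ℕ} {R : Set (Fin (n + 1))} {u : Perm (Fin (n + 1))}
    (hlow : StrictMonoOn u {p | (p : ℕ) < k}) (hhigh : StrictMonoOn u {p | k ≤ (p : ℕ)})
    (hR : u '' {p | k ≤ (p : ℕ)} = R) :
    invSetA n u = {p | p.2 < p.1 ∧ p.2 ∈ R ∧ p.1 ∉ R} := by
  ext ⟨a, b⟩
  simp only [invSetA, ← hR, image_eq_preimage_symm, Set.mem_preimage, Set.mem_ofPred_eq, not_le]
  refine and_congr_right fun hba => ⟨fun hlt => ?_, fun ⟨hb, ha⟩ => Fin.lt_def.2 (by omega)⟩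
  have hsame : ∀ s : Set (Fin (n + 1)), StrictMonoOn u s → u.symm a ∈ s → u.symm b ∉ s := by
    intro s hs ha hb
    have := hs ha hb hlt
    rw [apply_symm_apply, apply_symm_apply] at this
    exact lt_asymm hba this
  have := Fin.lt_def.1 hlt
  by_contra! h
  rcases Nat.lt_or_ge (u.symm a) k with ha | ha
  · exact hsame _ hlow ha (by simp only [Set.mem_ofPred_eq]; omega)
  · exact hsame _ hhigh ha (by simp only [Set.mem_ofPred_eq]; omega)

end

theorem Nat.exists_le_lt_and_not_succ {P : ℕ → Prop} {m M : ℕ} (hle : m ≤ M) (hm : P m)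
    (hM : ¬P M) : ∃ k, m ≤ k ∧ k < M ∧ P k ∧ ¬P (k + 1) := by
  induction M, hle using Nat.le_induction with
  | base => exact absurd hm hM
  | succ M hmM ih =>
    by_cases hPM : P M
    · exact ⟨M, hmM, M.lt_succ_self, hPM, hM⟩
    · obtain ⟨k, hmk, hkM, hk⟩ := ih hPM
      exact ⟨k, hmk, hkM.trans M.lt_succ_self, hk⟩

section

variable {n : ℕ} {w : Perm (Fin (n + 1))} {d : Fin n}

theorem mem_RsetA_iff {x : Fin (n + 1)} :
    x ∈ RsetA n w d ↔
      (w d.succ ≤ x ∧ x < w d.castSucc ∧ (d : ℕ) < w.symm x) ∨ w d.castSucc < x := by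
  simp only [RsetA, image_eq_preimage_symm, Set.mem_union, Set.mem_inter_iff, Set.mem_preimage,
    Set.mem_ofPred_eq, and_assoc]

theorem mem_RsetA_and_notMem_RsetA_iff {a b : Fin (n + 1)} (hba : b < a) :
    b ∈ RsetA n w d ∧ a ∉ RsetA n w d ↔
      w d.succ ≤ b ∧ a ≤ w d.castSucc ∧ (w.symm a : ℕ) ≤ d ∧ (d : ℕ) < w.symm b := by
  simp only [mem_RsetA_iff, not_or, not_and, not_lt]
  constructor
  · rintro ⟨hb | hb, ha, ha'⟩
    · refine ⟨hb.1, ha', ?_, hb.2.2⟩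
      rcases ha'.lt_or_eq with hlt | rfl
      · exact ha (hb.1.trans hba.le) hlt
      · simp
    · exact absurd (hb.trans hba) ha'.not_gt
  · rintro ⟨hb, ha, hpa, hpb⟩
    exact ⟨Or.inl ⟨hb, hba.trans_le ha, hpb⟩, fun _ _ => hpa, ha⟩

theorem exists_descent_or_factor {a b : Fin (n + 1)} (hab : (a, b) ∈ invSetA n w) :
    (∃ d, IsDescentA n w d ∧
      w d.succ ≤ b ∧ a ≤ w d.castSucc ∧ (w.symm a : ℕ) ≤ d ∧ (d : ℕ) < w.symm b) ∨
    ∃ c, (a, c) ∈ invSetA n w ∧ (c, b) ∈ invSetA n w := by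
  obtain ⟨hba, hpos⟩ := hab
  -- `d` is the last position in `[w⁻¹ a, w⁻¹ b)` whose value is at least `a`.
  obtain ⟨k, hak, hkb, hk, hk1⟩ := Nat.exists_le_lt_and_not_succ (P := fun k =>
      ∀ hk : k < n + 1, a ≤ w ⟨k, hk⟩) (Fin.lt_def.1 hpos).le (fun _ => by simp)
    (fun h => (h (w.symm b).isLt).not_gt (by simpa using hba))
  have hkn : k < n := hkb.trans_le (Nat.lt_succ_iff.1 (w.symm b).isLt)
  let d : Fin n := ⟨k, hkn⟩
  have had : a ≤ w d.castSucc := hk _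
  have hda : w d.succ < a := not_le.1 fun h => hk1 fun _ => h
  rcases le_or_gt (w d.succ) b with hdb | hbd
  · exact Or.inl ⟨d, hda.trans_le had, hdb, had, hak, hkb⟩
  · have hdb : d.succ < w.symm b := by
      refine Fin.lt_def.2 (lt_of_le_of_ne (by simpa using hkb) fun h => hbd.ne ?_)
      rw [Fin.ext h, apply_symm_apply]
    exact Or.inr ⟨w d.succ, ⟨hda, by simpa [Fin.lt_def] using Nat.lt_succ_of_le hak⟩,
      ⟨hbd, by simpa using hdb⟩⟩

end

namespace IsWdA

variable {n : ℕ} {w u : Perm (Fin (n + 1))} {d : Fin n}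

theorem mem_invSetA_iff (hu : IsWdA n w d u) {a b : Fin (n + 1)} :
    (a, b) ∈ invSetA n u ↔ b < a ∧
      w d.succ ≤ b ∧ a ≤ w d.castSucc ∧ (w.symm a : ℕ) ≤ d ∧ (d : ℕ) < w.symm b := by
  rw [invSetA_eq_of_strictMonoOn hu.1 hu.2.1 hu.2.2]
  exact and_congr_right mem_RsetA_and_notMem_RsetA_iff

theorem descent_mem_invSetA (hd : IsDescentA n w d) (hu : IsWdA n w d u) :
    (w d.castSucc, w d.succ) ∈ invSetA n u :=
  hu.mem_invSetA_iff.2 ⟨hd, le_rfl, le_rfl, by simp, by simp⟩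

theorem weakLEA_self (hu : IsWdA n w d u) : weakLEA n u w := fun ⟨a, b⟩ h => by
  obtain ⟨hba, -, -, hpa, hpb⟩ := hu.mem_invSetA_iff.1 h
  exact ⟨hba, Fin.lt_def.2 (by dsimp only; omega)⟩

theorem eq_of_mem_invSetA (hu : IsWdA n w d u) {d₀ : Fin n}
    (h : (w d₀.castSucc, w d₀.succ) ∈ invSetA n u) : d₀ = d := by
  obtain ⟨-, -, -, h₁, h₂⟩ := hu.mem_invSetA_iff.1 h
  simp only [symm_apply_apply, Fin.val_castSucc, Fin.val_succ] at h₁ h₂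
  exact Fin.ext (by omega)

theorem weakLEA_of_mem_invSetA (hu : IsWdA n w d u) {v : Perm (Fin (n + 1))}
    (hvw : weakLEA n v w) (hv : (w d.castSucc, w d.succ) ∈ invSetA n v) : weakLEA n u v := by
  rintro ⟨a, b⟩ h
  obtain ⟨hba, hb, ha, hpa, hpb⟩ := hu.mem_invSetA_iff.1 h
  have hab : (w d.castSucc, b) ∈ invSetA n v := by
    rcases hb.lt_or_eq with hlt | rfl
    · refine ⟨hba.trans_le ha, hv.2.trans (symm_lt_symm_of_notMem_invSetA hlt fun hw => ?_)⟩
      have := Fin.lt_def.1 (hvw hw).2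
      simp only [symm_apply_apply, Fin.val_succ] at this
      omega
    · exact hv
  rcases ha.lt_or_eq with hlt | rfl
  · refine ⟨hba, (symm_lt_symm_of_notMem_invSetA hlt fun hw => ?_).trans hab.2⟩
    have := Fin.lt_def.1 (hvw hw).2
    simp only [symm_apply_apply, Fin.val_castSucc] at this
    omega
  · exact hab

theorem symm_succ_eq (hd : IsDescentA n w d) (hu : IsWdA n w d u) :
    (u.symm (w d.succ) : ℕ) = u.symm (w d.castSucc) + 1 := by
  have hlt : (u.symm (w d.castSucc) : ℕ) < u.symm (w d.succ) :=
    Fin.lt_def.1 (hu.descent_mem_invSetA hd).2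
  by_contra hne
  set r : Fin (n + 1) := ⟨u.symm (w d.castSucc) + 1, by omega⟩
  have har : u.symm (w d.castSucc) < r := Fin.lt_def.2 (by simp [r])
  have hrb : r < u.symm (w d.succ) := Fin.lt_def.2 (by simp only [r]; omega)
  have hca : u r ≠ w d.castSucc := fun h => har.ne' (by simp [← h])
  have hcb : u r ≠ w d.succ := fun h => hrb.ne (by simp [← h])
  rcases hca.lt_or_gt with hra | hac
  · obtain ⟨-, hbc, -, -, hdc⟩ := hu.mem_invSetA_iff.1 ⟨hra, by simpa using har⟩
    obtain ⟨-, -, -, hcd, -⟩ :=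
      hu.mem_invSetA_iff.1 ⟨lt_of_le_of_ne hbc hcb.symm, by simpa using hrb⟩
    omega
  · obtain ⟨-, -, hra, -, -⟩ := hu.mem_invSetA_iff.1 ⟨hd.trans hac, by simpa using hrb⟩
    exact hra.not_gt hac

theorem isJoinIrreducibleA (hd : IsDescentA n w d) (hu : IsWdA n w d u) :
    IsJoinIrreducibleA n u := by
  have hdesc := hu.descent_mem_invSetA hd
  refine ⟨fun h1 => by rw [h1, invSetA_one] at hdesc; exact hdesc, fun x y hxy => ?_⟩
  obtain ⟨v, hv, hmem⟩ := hxy.exists_mem_invSetA (hu.symm_succ_eq hd)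
    (by rw [apply_symm_apply, apply_symm_apply]; exact hd)
  simp only [apply_symm_apply] at hmem
  have hvu : weakLEA n v u := hxy.1 v hv
  have hvu_eq : v = u := invSetA_injective
    (hvu.antisymm (hu.weakLEA_of_mem_invSetA (hvu.trans hu.weakLEA_self) hmem))
  rcases hv with rfl | rfl
  exacts [Or.inl hvu_eq, Or.inr hvu_eq]

end IsWdA

theorem weakLEA_of_forall_isWdA {n : ℕ} {w z : Perm (Fin (n + 1))}
    {f : Fin n → Perm (Fin (n + 1))} (hf : ∀ d, IsDescentA n w d → IsWdA n w d (f d))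
    (hz : ∀ d, IsDescentA n w d → weakLEA n (f d) z) : weakLEA n w z := by
  rintro ⟨a, b⟩ hab
  induction hk : (a : ℕ) - b using Nat.strong_induction_on generalizing a b with
  | _ k ih =>
  rcases exists_descent_or_factor hab with ⟨d, hd, hdab⟩ | ⟨c, hac, hcb⟩
  · exact hz d hd ((hf d hd).mem_invSetA_iff.2 ⟨hab.1, hdab⟩)
  · have hca : c < a := hac.1
    have hbc : b < c := hcb.1
    rw [Fin.lt_def] at hca hbc
    exact invSetA_trans (ih _ (by omega) _ _ hac rfl) (ih _ (by omega) _ _ hcb rfl)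

theorem canonical_join_rep_A_general (n : ℕ) (w : Equiv.Perm (Fin (n + 1)))
    (f : Fin n → Equiv.Perm (Fin (n + 1)))
    (hf : ∀ d, IsDescentA n w d → IsWdA n w d (f d)) :
    (∀ d, IsDescentA n w d → IsJoinIrreducibleA n (f d)) ∧
    IsCanonicalJoinRepA n w {x | ∃ d, IsDescentA n w d ∧ x = f d} := by
  refine ⟨fun d hd => (hf d hd).isJoinIrreducibleA hd, ?_, ⟨?_, ?_⟩, ?_, ?_⟩
  · exact (Set.finite_range f).subset (by rintro _ ⟨d, -, rfl⟩; exact ⟨d, rfl⟩)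
  · rintro _ ⟨d, hd, rfl⟩
    exact (hf d hd).weakLEA_self
  · exact fun z hz => weakLEA_of_forall_isWdA hf fun d hd => hz _ ⟨d, hd, rfl⟩
  · intro U hU hlub
    obtain ⟨_, ⟨d₀, hd₀, rfl⟩, hd₀U⟩ := Set.exists_of_ssubset hU
    obtain ⟨_, hv, hmem⟩ := hlub.exists_mem_invSetA (i := d₀.castSucc) (by simp) hd₀
    obtain ⟨d, hd, rfl⟩ := hU.1 hv
    exact hd₀U (by rwa [(hf d hd).eq_of_mem_invSetA hmem])
  · rintro V - hV - _ ⟨d, hd, rfl⟩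
    obtain ⟨v, hv, hmem⟩ := hV.exists_mem_invSetA (i := d.castSucc) (by simp) hd
    exact ⟨v, hv, (hf d hd).weakLEA_of_mem_invSetA (hV.1 v hv) hmem⟩

/-- Let `w ∈ 𝔖_{n+1}` and, for each descent `d` of `w`, let `w_d` be the unique permutation
which is strictly increasing on `{1,…,n+1−#R_d}` and on `{n+2−#R_d,…,n+1}` and maps the latter
onto `R_d`.  Then each `w_d` is join-irreducible and `{w_d : d a descent of w}` is the
canonical join representation of `w` in the right weak order. -/
theorem canonical_join_rep_A (n : ℕ) (hn : 1 ≤ n) (w : Equiv.Perm (Fin (n + 1)))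
    (f : Fin n → Equiv.Perm (Fin (n + 1)))
    (hf : ∀ d, IsDescentA n w d → IsWdA n w d (f d)) :
    (∀ d, IsDescentA n w d → IsJoinIrreducibleA n (f d)) ∧
    IsCanonicalJoinRepA n w {x | ∃ d, IsDescentA n w d ∧ x = f d} :=
  canonical_join_rep_A_general n w f hf
end

section
/- Let w ∈ W(D_n), let d be a descent of w, define R_d ⊆ {±1,…,±n} as in the canonical join decomposition of type D_n (cases (A)/(B) according to the sign of a_d + b_d and whether w({1,…,|d|}) ⊆ ±[a_d, n], with a_d = w(d), b_d = w(|d|+1), X_d = w({|d|+1,…,n})), and let w_d be the unique join-irreducible element of W(D_n) with R(w_d) = R_d, of type l_d. Then: (1) inv(w_d) ⊆ inv(w), i.e., w_d ≤ w in the right weak order; and (2) w_d s_{l_d} w_d⁻¹ = w s_d w⁻¹, where s_{−1} = (−1 2)(−2 1) and s_i = (i i+1)(−i −(i+1)) for 1 ≤ i ≤ n−1. -/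
/-- An element of the Coxeter group `W(D_n)`, modelled as a permutation of `ℤ` fixing
everything outside `{±1,…,±n}`, with `w(−i) = −w(i)` and an even number of
`i ∈ {1,…,n}` with `w(i) < 0`. -/
def IsDPerm (n : ℕ) (w : Equiv.Perm ℤ) : Prop :=
  (∀ i : ℤ, ¬(1 ≤ |i| ∧ |i| ≤ (n : ℤ)) → w i = i) ∧
  (∀ i : ℤ, w (-i) = -(w i)) ∧
  Even ((Finset.Icc (1 : ℤ) (n : ℤ)).filter (fun i => w i < 0)).card

/-- `l` is a descent of `w ∈ W(D_n)`: `l ∈ {−1} ∪ {1,…,n−1}` and `w(l) > w(|l|+1)`. -/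
def IsDescentD (n : ℕ) (w : Equiv.Perm ℤ) (l : ℤ) : Prop :=
  (l = -1 ∨ (1 ≤ l ∧ l ≤ (n : ℤ) - 1)) ∧ w (|l| + 1) < w l

/-- The inversion set of `w ∈ W(D_n)`:
`inv(w) = {(a,b) : a,b ∈ {±1,…,±n}, a > |b|, w⁻¹(a) < w⁻¹(b)}`. -/
def invSetD (n : ℕ) (w : Equiv.Perm ℤ) : Set (ℤ × ℤ) :=
  {p | (1 ≤ |p.1| ∧ |p.1| ≤ (n : ℤ)) ∧ (1 ≤ |p.2| ∧ |p.2| ≤ (n : ℤ)) ∧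
    |p.2| < p.1 ∧ w.symm p.1 < w.symm p.2}

/-- The right weak order on `W(D_n)`: `u ≤ w` iff `inv(u) ⊆ inv(w)`. -/
def weakLED (n : ℕ) (u w : Equiv.Perm ℤ) : Prop :=
  invSetD n u ⊆ invSetD n w

/-- `w` is a least upper bound of `S ⊆ W(D_n)` in the right weak order on `W(D_n)`. -/
def IsWeakLUBD (n : ℕ) (S : Set (Equiv.Perm ℤ)) (w : Equiv.Perm ℤ) : Prop :=
  (∀ x ∈ S, weakLED n x w) ∧ ∀ z, IsDPerm n z → (∀ x ∈ S, weakLED n x z) → weakLED n w z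

/-- `w` is join-irreducible in the right weak order on `W(D_n)`. -/
def IsJoinIrreducibleD (n : ℕ) (w : Equiv.Perm ℤ) : Prop :=
  w ≠ 1 ∧ ∀ u v, IsDPerm n u → IsDPerm n v → IsWeakLUBD n {u, v} w → u = w ∨ v = w

/-- `[x,y]`: the set of nonzero integers `k` with `x ≤ k ≤ y`. -/
def nzIcc (x y : ℤ) : Set ℤ := {k | k ≠ 0 ∧ x ≤ k ∧ k ≤ y}

/-- `−Y = {−y : y ∈ Y}`. -/
def negSet (Y : Set ℤ) : Set ℤ := {k | -k ∈ Y}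

/-- `±Y = Y ∪ (−Y)`. -/
def pmSet (Y : Set ℤ) : Set ℤ := Y ∪ negSet Y

open Classical in
/-- The set `R_d` attached to a descent `d` of `w ∈ W(D_n)`, where `a_d = w(d)`,
`b_d = w(|d|+1)` and `X_d = w({|d|+1,…,n})`:
(A) if `a_d + b_d < 0` and `w({1,…,|d|}) ⊆ ±[a_d, n]`, then
`R_d = {−a_d} ∪ ((±[1,a_d−1]) ∩ X_d) ∪ ([a_d+1,−b_d−1] ∖ (−X_d)) ∪ [−b_d+1,n]` if `a_d > 0`,
and `R_d = ([−a_d,−b_d−1] ∖ (−X_d)) ∪ [−b_d+1,n]` if `a_d < 0`;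
(B) otherwise, `R_d = ([b_d,a_d−1] ∩ X_d) ∪ [a_d+1,n]` if `a_d + b_d > 0`, and
`R_d = ([b_d,a_d−1] ∩ X_d) ∪ ([a_d+1,−b_d−1] ∖ (−X_d)) ∪ [−b_d+1,n]` if `a_d + b_d < 0`. -/
noncomputable def RsetD (n : ℕ) (w : Equiv.Perm ℤ) (d : ℤ) : Set ℤ :=
  let a := w d
  let b := w (|d| + 1)
  let X := ⇑w '' Set.Icc (|d| + 1) (n : ℤ)
  if a + b < 0 ∧ ⇑w '' Set.Icc 1 |d| ⊆ pmSet (nzIcc a (n : ℤ)) then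
    if 0 < a then
      {-a} ∪ (pmSet (nzIcc 1 (a - 1)) ∩ X) ∪ (nzIcc (a + 1) (-b - 1) \ negSet X) ∪
        nzIcc (-b + 1) (n : ℤ)
    else
      (nzIcc (-a) (-b - 1) \ negSet X) ∪ nzIcc (-b + 1) (n : ℤ)
  else
    if 0 < a + b then
      (nzIcc b (a - 1) ∩ X) ∪ nzIcc (a + 1) (n : ℤ)
    else
      (nzIcc b (a - 1) ∩ X) ∪ (nzIcc (a + 1) (-b - 1) \ negSet X) ∪
        nzIcc (-b + 1) (n : ℤ)

/-- The simple reflections of `W(D_n)`: `s_{−1} = (−1 2)(−2 1)` and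
`s_i = (i i+1)(−i −(i+1))` for `1 ≤ i ≤ n−1`. -/
def simpleD (i : ℤ) : Equiv.Perm ℤ :=
  if i = -1 then Equiv.swap (-1) 2 * Equiv.swap (-2) 1
  else Equiv.swap i (i + 1) * Equiv.swap (-i) (-(i + 1))

/-!
A join-irreducible `u` with descent `l` is increasing on the positions `|l|+1, …, n`, and also
on `1, …, |l|`, where moreover `|u 1| < u 2` if `|l| ≥ 2`. Hence `u` is controlled by its tail
`S = R(u) = u{|l|+1, …, n}`: an inversion `(A, B)` of `u` has `-A ∈ S, -B ∉ S` or
`±A ∉ S, B ∈ S`; `u(|l|+1) = min S`; and `u l` is the largest `c ∈ [1, n]` with `±c ∉ S`.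
So both claims become statements about `R_d` alone. In each of the four cases of its
definition, every pair of the above shape is checked to be an inversion of `w`, and `min R_d`
and the largest `c` with `±c ∉ R_d` are `b_d, a_d` in case (B) and `-a_d, -b_d` in case (A);
either way `u s_l u⁻¹ = (a_d b_d)(-a_d -b_d) = w s_d w⁻¹`.
-/

open Equiv

def IsSignedPerm (n : ℕ) (w : Perm ℤ) : Prop :=
  (∀ i : ℤ, ¬(1 ≤ |i| ∧ |i| ≤ (n : ℤ)) → w i = i) ∧ ∀ i : ℤ, w (-i) = -w i

lemma IsDPerm.isSignedPerm {n : ℕ} {w : Perm ℤ} (hw : IsDPerm n w) : IsSignedPerm n w :=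
  ⟨hw.1, hw.2.1⟩

lemma one_le_abs_and_abs_le_iff {i c : ℤ} :
    (1 ≤ |i| ∧ |i| ≤ c) ↔ (-c ≤ i ∧ i ≤ c ∧ i ≠ 0) := by
  rcases abs_cases i with ⟨h, _⟩ | ⟨h, _⟩ <;> rw [h] <;> omega

lemma apply_ne_zero_of_odd {w : Perm ℤ} (hodd : ∀ i : ℤ, w (-i) = -w i) {i : ℤ} (hi : i ≠ 0) :
    w i ≠ 0 := by
  have h0 : w 0 = 0 := by have := hodd 0; rw [neg_zero] at this; omega
  exact fun h => hi (w.injective (h.trans h0.symm))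

namespace IsSignedPerm

variable {n : ℕ} {w : Perm ℤ}

lemma symm (hw : IsSignedPerm n w) : IsSignedPerm n w.symm := by
  refine ⟨fun i hi => ?_, fun i => ?_⟩
  · rw [Equiv.symm_apply_eq, hw.1 i hi]
  · rw [Equiv.symm_apply_eq, hw.2, Equiv.apply_symm_apply]

lemma apply_mem_window (hw : IsSignedPerm n w) {i : ℤ} (hi : -n ≤ i ∧ i ≤ n ∧ i ≠ 0) :
    -n ≤ w i ∧ w i ≤ n ∧ w i ≠ 0 := by
  rw [← one_le_abs_and_abs_le_iff] at hi ⊢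
  by_contra h
  exact h ((w.injective (hw.1 _ h)).symm ▸ hi)

lemma symm_mem_window_iff (hw : IsSignedPerm n w) (v : ℤ) :
    (-n ≤ w.symm v ∧ w.symm v ≤ n ∧ w.symm v ≠ 0) ↔ (-n ≤ v ∧ v ≤ n ∧ v ≠ 0) :=
  ⟨fun h => apply_symm_apply w v ▸ hw.apply_mem_window h, hw.symm.apply_mem_window⟩

lemma symm_eq_neg_iff (hw : IsSignedPerm n w) (v i : ℤ) : w.symm v = -i ↔ v = -w i := by
  rw [Equiv.symm_apply_eq, hw.2]

end IsSignedPerm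

section Descent

variable {n : ℕ} {w : Perm ℤ} {d : ℤ}

lemma IsDescentD.abs_cases (hd : IsDescentD n w d) :
    (d = -1 ∧ |d| = 1) ∨ (1 ≤ d ∧ d ≤ n - 1 ∧ |d| = d) := by
  rcases hd.1 with rfl | h
  · exact Or.inl ⟨rfl, by norm_num⟩
  · exact Or.inr ⟨h.1, h.2, abs_of_pos (by omega)⟩

lemma IsDescentD.two_le (hw : IsSignedPerm n w) (hd : IsDescentD n w d) : 2 ≤ n := by
  by_contra hn
  rcases hd.1 with rfl | h
  · have h2 : w 2 = 2 := hw.1 2 (by norm_num; omega)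
    have h1 : w (-1) ≤ 1 := by
      by_contra h1
      have := w.injective (hw.1 (w (-1)) (by rw [abs_of_pos (by omega)]; omega))
      omega
    have := hd.2
    norm_num at this
    omega
  · omega

lemma IsDescentD.add_ne_zero (hodd : ∀ i : ℤ, w (-i) = -w i) (hd : IsDescentD n w d) :
    w d + w (|d| + 1) ≠ 0 := by
  intro h
  have := w.injective (show w d = w (-(|d| + 1)) by rw [hodd]; omega)
  have := hd.abs_cases
  omega

lemma IsDescentD.bounds (hw : IsSignedPerm n w) (hd : IsDescentD n w d) :
    1 ≤ |d| ∧ |d| ≤ n - 1 ∧ -|d| ≤ d ∧ d ≤ |d| ∧ w (|d| + 1) < w d ∧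
      -n ≤ w d ∧ w d ≤ n ∧ w d ≠ 0 ∧ -n ≤ w (|d| + 1) ∧ w (|d| + 1) ≤ n := by
  have hdabs := hd.abs_cases
  have hn := hd.two_le hw
  have ha := hw.apply_mem_window (i := d) (by omega)
  have hb := hw.apply_mem_window (i := |d| + 1) (by omega)
  exact ⟨by omega, by omega, by omega, by omega, hd.2, by omega, by omega, by omega, by omega,
    by omega⟩

end Descent

lemma conj_simpleD {w : Perm ℤ} (hodd : ∀ i : ℤ, w (-i) = -w i) {d : ℤ} (hd : d = -1 ∨ 1 ≤ d) :
    w * simpleD d * w⁻¹ = swap (w d) (w (|d| + 1)) * swap (-w d) (-w (|d| + 1)) := by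
  have hconj : ∀ x y, w * swap x y * w⁻¹ = swap (w x) (w y) :=
    fun x y => (swap_apply_apply w x y).symm
  have hmul : ∀ f g : Perm ℤ, w * (f * g) * w⁻¹ = (w * f * w⁻¹) * (w * g * w⁻¹) := by
    intro f g; group
  rcases hd with rfl | hd
  · rw [simpleD, if_pos rfl, hmul, hconj, hconj, show |(-1 : ℤ)| + 1 = 2 by norm_num,
      hodd, hodd 2, neg_neg, swap_comm (w 1)]
  · rw [simpleD, if_neg (by omega), hmul, hconj, hconj, abs_of_pos (by omega), hodd, hodd]

lemma commute_swap_swap_neg {a b : ℤ} (ha : a ≠ 0) (hb : b ≠ 0) :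
    Commute (swap a b) (swap (-a) (-b)) := by
  by_cases hab : a + b = 0
  · rw [show -a = b by omega, show -b = a by omega, swap_comm]
  · refine Perm.Disjoint.commute fun x => ?_
    by_cases hx : x = a ∨ x = b
    · exact Or.inr (swap_apply_of_ne_of_ne (by omega) (by omega))
    · exact Or.inl (swap_apply_of_ne_of_ne (by omega) (by omega))

def pmCompl (n : ℕ) (S : Set ℤ) : Set ℤ := {c | 1 ≤ c ∧ c ≤ n ∧ c ∉ S ∧ -c ∉ S}

/-- The pairs that can be inversions of a join-irreducible element with `R(u) = S`. -/
def invSetOfTail (n : ℕ) (S : Set ℤ) : Set (ℤ × ℤ) :=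
  {p | -p.1 < p.2 ∧ p.2 < p.1 ∧ p.2 ≠ 0 ∧ p.1 ≤ n ∧
    ((-p.1 ∈ S ∧ -p.2 ∉ S) ∨ (p.1 ∉ S ∧ -p.1 ∉ S ∧ p.2 ∈ S))}

lemma invSetOfTail_subset_invSetD {n : ℕ} {w : Perm ℤ} {S : Set ℤ}
    (h : ∀ A B : ℤ, -A < B → B < A → B ≠ 0 → A ≤ n →
      (-A ∈ S ∧ -B ∉ S) ∨ (A ∉ S ∧ -A ∉ S ∧ B ∈ S) → w.symm A < w.symm B) :
    invSetOfTail n S ⊆ invSetD n w := by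
  rintro ⟨A, B⟩ ⟨hBA, hAB, hB0, hAn, hS⟩
  refine ⟨?_, ?_, abs_lt.2 ⟨hBA, hAB⟩, h A B hBA hAB hB0 hAn hS⟩ <;>
    rw [one_le_abs_and_abs_le_iff] <;> dsimp only <;> omega

section UniqueDescent

variable {n : ℕ} {u : Perm ℤ} {l : ℤ}

lemma apply_lt_apply_add_one_of_ne (hl' : ∀ l', IsDescentD n u l' → l' = l) {k : ℤ}
    (hk : 1 ≤ k) (hkn : k ≤ n - 1) (hkl : k ≠ l) : u k < u (k + 1) := by
  by_contra h
  have hne : u (k + 1) ≠ u k := fun e => by have := u.injective e; omega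
  refine hkl (hl' k ⟨Or.inr ⟨hk, hkn⟩, ?_⟩)
  rw [abs_of_pos (by omega)]
  omega

lemma apply_neg_one_lt_apply_two (hl' : ∀ l', IsDescentD n u l' → l' = l) (hl : l ≠ -1) :
    u (-1) < u 2 := by
  by_contra h
  have hne : u 2 ≠ u (-1) := fun e => by have := u.injective e; omega
  exact hl (hl' (-1) ⟨Or.inl rfl, by norm_num; omega⟩).symm

lemma strictMonoOn_tail (hl : IsDescentD n u l) (hl' : ∀ l', IsDescentD n u l' → l' = l) :
    StrictMonoOn u (Set.Icc (|l| + 1) n) := by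
  refine strictMonoOn_of_lt_add_one Set.ordConnected_Icc fun k _ hk hk1 => ?_
  have := hl.abs_cases
  exact apply_lt_apply_add_one_of_ne hl' (by grind) (by grind) (by grind)

lemma strictMonoOn_head (hl : IsDescentD n u l) (hl' : ∀ l', IsDescentD n u l' → l' = l) :
    StrictMonoOn u (Set.Icc 1 |l|) := by
  refine strictMonoOn_of_lt_add_one Set.ordConnected_Icc fun k _ hk hk1 => ?_
  have := hl.abs_cases
  exact apply_lt_apply_add_one_of_ne hl' (by grind) (by grind) (by grind)

lemma abs_apply_lt_apply (hodd : ∀ i : ℤ, u (-i) = -u i) (hl : IsDescentD n u l)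
    (hl' : ∀ l', IsDescentD n u l' → l' = l) {i j : ℤ} (hi : 1 ≤ i) (hij : i < j)
    (hj : j ≤ |l|) : |u i| < u j := by
  have hmono := strictMonoOn_head hl hl'
  have hl1 : l ≠ -1 := by rintro rfl; norm_num at hj; omega
  have h12 : |u 1| < u 2 := abs_lt.2
    ⟨by linarith [hodd 1, apply_neg_one_lt_apply_two hl' hl1],
      hmono ⟨le_rfl, by omega⟩ ⟨by omega, by omega⟩ (by norm_num)⟩
  have h2j : u 2 ≤ u j := hmono.monotoneOn ⟨by omega, by omega⟩ ⟨by omega, hj⟩ (by omega)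
  rcases eq_or_lt_of_le hi with rfl | hi
  · exact h12.trans_le h2j
  · have h2i : u 2 ≤ u i := hmono.monotoneOn ⟨by omega, by omega⟩ ⟨by omega, by omega⟩ hi
    rw [abs_of_pos (by linarith [abs_nonneg (u 1)])]
    exact hmono ⟨by omega, by omega⟩ ⟨by omega, hj⟩ hij

lemma apply_descent_pos (hu : IsSignedPerm n u) (hl : IsDescentD n u l)
    (hl' : ∀ l', IsDescentD n u l' → l' = l) : 0 < u l := by
  have hodd := hu.2
  have hdesc := hl.2
  rcases hl.abs_cases with ⟨rfl, h⟩ | ⟨h1, -, h⟩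
  · rw [h] at hdesc
    have := apply_lt_apply_add_one_of_ne hl' (k := 1) le_rfl
      (by have := hl.two_le hu; omega) (by norm_num)
    linarith [hodd 1]
  · rcases eq_or_lt_of_le h1 with rfl | h1
    · rw [h] at hdesc
      norm_num at hdesc
      linarith [hodd 1, apply_neg_one_lt_apply_two hl' (by norm_num)]
    · linarith [abs_nonneg (u 1), abs_apply_lt_apply hodd hl hl' le_rfl h1 h.ge]

lemma abs_apply_le_apply_descent (hu : IsSignedPerm n u) (hl : IsDescentD n u l)
    (hl' : ∀ l', IsDescentD n u l' → l' = l) {i : ℤ} (hi : -|l| ≤ i ∧ i ≤ |l| ∧ i ≠ 0) :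
    |u i| ≤ u l := by
  have hodd := hu.2
  have habs : |u (|i|)| = |u i| := by
    rcases abs_choice i with h | h <;> rw [h]
    rw [hodd, abs_neg]
  have hpos := apply_descent_pos hu hl hl'
  obtain ⟨hi1, hil⟩ := one_le_abs_and_abs_le_iff.2 hi
  rw [← habs]
  rcases eq_or_lt_of_le hil with h | h
  · rw [h]
    rcases hl.abs_cases with ⟨rfl, h1⟩ | ⟨-, -, h1⟩
    · rw [h1, ← abs_neg, ← hodd, abs_of_pos hpos]
    · rw [h1, abs_of_pos hpos]
  · rcases hl.abs_cases with ⟨-, h1⟩ | ⟨-, -, h1⟩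
    · omega
    · have := abs_apply_lt_apply hodd hl hl' hi1 h le_rfl
      rw [h1] at this
      exact this.le

lemma apply_le_abs_apply (hodd : ∀ i : ℤ, u (-i) = -u i) (hl : IsDescentD n u l)
    (hl' : ∀ l', IsDescentD n u l' → l' = l) {i j : ℤ}
    (hi : -|l| ≤ i ∧ i ≤ |l| ∧ i ≠ 0) (hj : -|l| ≤ j ∧ j ≤ |l| ∧ j ≠ 0) (hij : i < j) :
    u i ≤ |u j| := by
  have key : ∀ {p q : ℤ}, 1 ≤ p → p < q → q ≤ |l| → |u p| < u q :=
    abs_apply_lt_apply hodd hl hl'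
  have hneg : u i = -u (-i) := by rw [hodd, neg_neg]
  have habs : |u (-j)| = |u j| := by rw [hodd, abs_neg]
  have := le_abs_self (u j)
  have := neg_abs_le (u j)
  rcases lt_or_gt_of_ne hi.2.2 with hi0 | hi0
  · rcases lt_or_gt_of_ne hj.2.2 with hj0 | hj0
    · linarith [key (p := -j) (q := -i) (by omega) (by omega) (by omega)]
    · rcases lt_trichotomy (-i) j with h | rfl | h
      · linarith [neg_abs_le (u (-i)), key (by omega) h hj.2.1]
      · linarith
      · linarith [key (q := -i) (by omega) h (by omega)]
  · linarith [le_abs_self (u i), key hi0 hij hj.2.1]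

lemma isLeast_tail (hu : IsSignedPerm n u) (hl : IsDescentD n u l)
    (hl' : ∀ l', IsDescentD n u l' → l' = l) :
    IsLeast (u '' Set.Icc (|l| + 1) n) (u (|l| + 1)) :=
  (strictMonoOn_tail hl hl').monotoneOn.map_isLeast
    (isLeast_Icc (by have := hl.abs_cases; have := hl.two_le hu; omega))

lemma isGreatest_pmCompl_tail (hu : IsSignedPerm n u) (hl : IsDescentD n u l)
    (hl' : ∀ l', IsDescentD n u l' → l' = l) :
    IsGreatest (pmCompl n (u '' Set.Icc (|l| + 1) n)) (u l) := by
  have hpos := apply_descent_pos hu hl hl'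
  have hlabs := hl.abs_cases
  simp only [pmCompl, Set.mem_image_equiv, Set.mem_Icc, hu.symm.2]
  refine ⟨⟨hpos, ?_, ?_, ?_⟩, ?_⟩
  · have := hu.apply_mem_window (i := l)
    have := hl.two_le hu
    omega
  · rw [symm_apply_apply]; omega
  · rw [symm_apply_apply]; omega
  · rintro c ⟨hc1, hcn, hcS, hcS'⟩
    have hwin := hu.symm.apply_mem_window (i := c) ⟨by omega, hcn, by omega⟩
    have := abs_apply_le_apply_descent hu hl hl' (i := u.symm c) (by omega)
    rwa [apply_symm_apply, abs_of_pos (by omega)] at this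

lemma invSetD_subset_invSetOfTail (hu : IsSignedPerm n u) (hl : IsDescentD n u l)
    (hl' : ∀ l', IsDescentD n u l' → l' = l) :
    invSetD n u ⊆ invSetOfTail n (u '' Set.Icc (|l| + 1) n) := by
  rintro ⟨A, B⟩ ⟨hA, hB, hBA, hinv⟩
  dsimp only at hA hB hBA hinv
  rw [one_le_abs_and_abs_le_iff] at hA hB
  obtain ⟨hBA₁, hBA₂⟩ := abs_lt.1 hBA
  simp only [invSetOfTail, Set.mem_ofPred_eq, Set.mem_image_equiv, Set.mem_Icc, hu.symm.2]
  refine ⟨by omega, hBA₂, hB.2.2, hA.2.1, ?_⟩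
  have hi := hu.symm.apply_mem_window hA
  have hj := hu.symm.apply_mem_window hB
  have hmono := strictMonoOn_tail hl hl'
  have hAi : u (u.symm A) = A := apply_symm_apply u A
  have hBj : u (u.symm B) = B := apply_symm_apply u B
  rcases lt_or_ge (u.symm A) (-|l|) with h | h
  · refine Or.inl ⟨by omega, fun hj' => ?_⟩
    have := hmono hj' ⟨by omega, by omega⟩ (by omega : -u.symm B < -u.symm A)
    rw [hu.2, hu.2, hAi, hBj] at this
    omega
  · rcases le_or_gt (u.symm A) |l| with h' | h'
    · refine Or.inr ⟨by omega, by omega, ⟨?_, hj.2.1⟩⟩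
      by_contra hjl
      have := apply_le_abs_apply hu.2 hl hl' (i := u.symm A) (j := u.symm B)
        (by omega) (by omega) hinv
      rw [hAi, hBj] at this
      exact absurd hBA (not_lt.2 this)
    · have := hmono ⟨by omega, hi.2.1⟩ ⟨by omega, hj.2.1⟩ hinv
      rw [hAi, hBj] at this
      omega

end UniqueDescent

section RsetD

variable {n : ℕ} {w : Perm ℤ} {d : ℤ}

lemma mem_RsetD_caseB_pos (hw : IsSignedPerm n w) (hd : IsDescentD n w d)
    (hA : ¬(w d + w (|d| + 1) < 0 ∧ w '' Set.Icc 1 |d| ⊆ pmSet (nzIcc (w d) n)))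
    (hab : 0 < w d + w (|d| + 1)) (v : ℤ) :
    v ∈ RsetD n w d ↔
      (w (|d| + 1) ≤ v ∧ v < w d ∧ |d| < w.symm v ∧ w.symm v ≤ n) ∨ (w d < v ∧ v ≤ n) := by
  have := hw.symm_mem_window_iff v
  have := hd.bounds hw
  simp only [RsetD]
  rw [if_neg hA, if_pos hab]
  simp only [Set.mem_union, Set.mem_inter_iff, nzIcc, Set.mem_ofPred_eq, Set.mem_image_equiv,
    Set.mem_Icc]
  omega

lemma RsetD_spec_caseB_pos (hw : IsSignedPerm n w) (hd : IsDescentD n w d)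
    (hA : ¬(w d + w (|d| + 1) < 0 ∧ w '' Set.Icc 1 |d| ⊆ pmSet (nzIcc (w d) n)))
    (hab : 0 < w d + w (|d| + 1)) :
    invSetOfTail n (RsetD n w d) ⊆ invSetD n w ∧ IsLeast (RsetD n w d) (w (|d| + 1)) ∧
      IsGreatest (pmCompl n (RsetD n w d)) (w d) := by
  have hmem := mem_RsetD_caseB_pos hw hd hA hab
  have := hd.bounds hw
  refine ⟨invSetOfTail_subset_invSetD fun A B hBA hAB hB0 hAn h => ?_, ⟨?_, fun r hr => ?_⟩,
    ⟨?_, fun c hc => ?_⟩⟩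
  · simp only [hmem, hw.symm.2] at h
    have := hw.symm.apply_mem_window (i := A) (by omega)
    have := hw.symm.apply_mem_window (i := B) (by omega)
    by_contra hle
    rcases h with ⟨hA, hB⟩ | ⟨hA, hA', hB⟩
    · have := hw.symm_eq_neg_iff B d
      omega
    · have := w.symm_apply_eq (x := A) (y := d)
      omega
  · rw [hmem, symm_apply_apply]
    omega
  · rw [hmem] at hr
    omega
  · simp only [pmCompl, Set.mem_ofPred_eq, hmem, hw.symm.2, symm_apply_apply]
    omega
  · simp only [pmCompl, Set.mem_ofPred_eq, hmem] at hc
    omega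

lemma mem_pmSet_nzIcc_of_neg {a v c : ℤ} (ha : a < 0) (hv : -c ≤ v ∧ v ≤ c ∧ v ≠ 0) :
    v ∈ pmSet (nzIcc a c) := by
  simp only [pmSet, negSet, nzIcc, Set.mem_union, Set.mem_ofPred_eq]
  omega

lemma image_subset_pmSet_nzIcc_of_neg (hw : IsSignedPerm n w) (hd : IsDescentD n w d)
    (ha : w d < 0) : w '' Set.Icc 1 |d| ⊆ pmSet (nzIcc (w d) n) := by
  rintro - ⟨i, hi, rfl⟩
  have := hd.bounds hw
  exact mem_pmSet_nzIcc_of_neg ha (hw.apply_mem_window (by grind))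

lemma apply_pos_of_caseB_neg (hw : IsSignedPerm n w) (hd : IsDescentD n w d)
    (hA : ¬(w d + w (|d| + 1) < 0 ∧ w '' Set.Icc 1 |d| ⊆ pmSet (nzIcc (w d) n)))
    (hab : w d + w (|d| + 1) < 0) : 0 < w d := by
  have := hd.bounds hw
  by_contra ha
  exact hA ⟨hab, image_subset_pmSet_nzIcc_of_neg hw hd (by omega)⟩

lemma mem_RsetD_caseB_neg (hw : IsSignedPerm n w) (hd : IsDescentD n w d)
    (hA : ¬(w d + w (|d| + 1) < 0 ∧ w '' Set.Icc 1 |d| ⊆ pmSet (nzIcc (w d) n)))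
    (hab : w d + w (|d| + 1) < 0) (v : ℤ) :
    v ∈ RsetD n w d ↔
      (w (|d| + 1) ≤ v ∧ v < w d ∧ |d| < w.symm v ∧ w.symm v ≤ n) ∨
        (w d < v ∧ v < -w (|d| + 1) ∧ -|d| ≤ w.symm v) ∨ (-w (|d| + 1) < v ∧ v ≤ n) := by
  have := hw.symm_mem_window_iff v
  have := hd.bounds hw
  have := apply_pos_of_caseB_neg hw hd hA hab
  simp only [RsetD]
  rw [if_neg hA, if_neg (by omega)]
  simp only [Set.mem_union, Set.mem_inter_iff, Set.mem_sdiff, negSet, nzIcc, Set.mem_ofPred_eq,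
    Set.mem_image_equiv, Set.mem_Icc, hw.symm.2]
  omega

lemma RsetD_spec_caseB_neg (hw : IsSignedPerm n w) (hd : IsDescentD n w d)
    (hA : ¬(w d + w (|d| + 1) < 0 ∧ w '' Set.Icc 1 |d| ⊆ pmSet (nzIcc (w d) n)))
    (hab : w d + w (|d| + 1) < 0) :
    invSetOfTail n (RsetD n w d) ⊆ invSetD n w ∧ IsLeast (RsetD n w d) (w (|d| + 1)) ∧
      IsGreatest (pmCompl n (RsetD n w d)) (w d) := by
  have hmem := mem_RsetD_caseB_neg hw hd hA hab
  have := apply_pos_of_caseB_neg hw hd hA hab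
  have := hd.bounds hw
  refine ⟨invSetOfTail_subset_invSetD fun A B hBA hAB hB0 hAn h => ?_, ⟨?_, fun r hr => ?_⟩,
    ⟨?_, fun c hc => ?_⟩⟩
  · simp only [hmem, hw.symm.2] at h
    have := hw.symm.apply_mem_window (i := A) (by omega)
    have := hw.symm.apply_mem_window (i := B) (by omega)
    by_contra hle
    rcases h with ⟨hA, hB⟩ | ⟨hA, hA', hB⟩
    · have := hw.symm_eq_neg_iff B d
      omega
    · have := w.symm_apply_eq (x := A) (y := d)
      have := hw.symm_eq_neg_iff A (|d| + 1)
      omega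
  · rw [hmem, symm_apply_apply]
    omega
  · rw [hmem] at hr
    omega
  · simp only [pmCompl, Set.mem_ofPred_eq, hmem, hw.symm.2, symm_apply_apply]
    omega
  · simp only [pmCompl, Set.mem_ofPred_eq, hmem, hw.symm.2] at hc
    have := hw.symm.apply_mem_window (i := c) (by omega)
    have := hw.symm_eq_neg_iff c (|d| + 1)
    omega

lemma le_neg_or_le_of_caseA (hw : IsSignedPerm n w)
    (hF : w '' Set.Icc 1 |d| ⊆ pmSet (nzIcc (w d) n)) {v : ℤ}
    (hv : -|d| ≤ w.symm v ∧ w.symm v ≤ |d| ∧ w.symm v ≠ 0) : v ≤ -w d ∨ w d ≤ v := by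
  have key : ∀ x, 1 ≤ w.symm x → w.symm x ≤ |d| → x ∈ pmSet (nzIcc (w d) n) :=
    fun x h1 h2 => hF (Set.mem_image_equiv.2 ⟨h1, h2⟩)
  simp only [pmSet, negSet, nzIcc, Set.mem_union, Set.mem_ofPred_eq] at key
  rcases lt_or_gt_of_ne hv.2.2 with h | h
  · have := key (-v) (by rw [hw.symm.2]; omega) (by rw [hw.symm.2]; omega)
    omega
  · have := key v (by omega) hv.2.1
    omega

lemma mem_RsetD_caseA_pos (hw : IsSignedPerm n w) (hd : IsDescentD n w d)
    (hF : w '' Set.Icc 1 |d| ⊆ pmSet (nzIcc (w d) n)) (hab : w d + w (|d| + 1) < 0)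
    (ha : 0 < w d) (v : ℤ) :
    v ∈ RsetD n w d ↔ v = -w d ∨ (-w d < v ∧ v < w d ∧ |d| < w.symm v ∧ w.symm v ≤ n) ∨
        (w d < v ∧ v < -w (|d| + 1) ∧ -|d| ≤ w.symm v) ∨ (-w (|d| + 1) < v ∧ v ≤ n) := by
  have := hw.symm_mem_window_iff v
  have := hd.bounds hw
  simp only [RsetD]
  rw [if_pos ⟨hab, hF⟩, if_pos ha]
  simp only [Set.mem_union, Set.mem_inter_iff, Set.mem_sdiff, Set.mem_singleton_iff, pmSet,
    negSet, nzIcc, Set.mem_ofPred_eq, Set.mem_image_equiv, Set.mem_Icc, hw.symm.2]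
  omega

lemma RsetD_spec_caseA_pos (hw : IsSignedPerm n w) (hd : IsDescentD n w d)
    (hF : w '' Set.Icc 1 |d| ⊆ pmSet (nzIcc (w d) n)) (hab : w d + w (|d| + 1) < 0)
    (ha : 0 < w d) :
    invSetOfTail n (RsetD n w d) ⊆ invSetD n w ∧ IsLeast (RsetD n w d) (-w d) ∧
      IsGreatest (pmCompl n (RsetD n w d)) (-w (|d| + 1)) := by
  have hmem := mem_RsetD_caseA_pos hw hd hF hab ha
  have := hd.bounds hw
  refine ⟨invSetOfTail_subset_invSetD fun A B hBA hAB hB0 hAn h => ?_, ⟨?_, fun r hr => ?_⟩,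
    ⟨?_, fun c hc => ?_⟩⟩
  · simp only [hmem, hw.symm.2] at h
    have := hw.symm.apply_mem_window (i := A) (by omega)
    have := hw.symm.apply_mem_window (i := B) (by omega)
    by_contra hle
    rcases h with ⟨hA, hB⟩ | ⟨hA, hA', hB⟩
    · have := w.symm_apply_eq (x := A) (y := d)
      have := le_neg_or_le_of_caseA hw hF (v := B)
      omega
    · have := hw.symm_eq_neg_iff A (|d| + 1)
      have := hw.symm_eq_neg_iff B d
      omega
  · rw [hmem]
    omega
  · rw [hmem] at hr
    omega
  · simp only [pmCompl, Set.mem_ofPred_eq, hmem, neg_neg]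
    omega
  · simp only [pmCompl, Set.mem_ofPred_eq, hmem] at hc
    omega

lemma mem_RsetD_caseA_neg (hw : IsSignedPerm n w) (hd : IsDescentD n w d)
    (hab : w d + w (|d| + 1) < 0) (ha : w d < 0) (v : ℤ) :
    v ∈ RsetD n w d ↔
      (-w d ≤ v ∧ v < -w (|d| + 1) ∧ -|d| ≤ w.symm v) ∨ (-w (|d| + 1) < v ∧ v ≤ n) := by
  have := hw.symm_mem_window_iff v
  have := hd.bounds hw
  simp only [RsetD]
  rw [if_pos ⟨hab, image_subset_pmSet_nzIcc_of_neg hw hd ha⟩, if_neg (by omega)]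
  simp only [Set.mem_union, Set.mem_sdiff, negSet, nzIcc, Set.mem_ofPred_eq,
    Set.mem_image_equiv, Set.mem_Icc, hw.symm.2]
  omega

lemma RsetD_spec_caseA_neg (hw : IsSignedPerm n w) (hd : IsDescentD n w d)
    (hab : w d + w (|d| + 1) < 0) (ha : w d < 0) :
    invSetOfTail n (RsetD n w d) ⊆ invSetD n w ∧ IsLeast (RsetD n w d) (-w d) ∧
      IsGreatest (pmCompl n (RsetD n w d)) (-w (|d| + 1)) := by
  have hmem := mem_RsetD_caseA_neg hw hd hab ha
  have := hd.bounds hw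
  refine ⟨invSetOfTail_subset_invSetD fun A B hBA hAB hB0 hAn h => ?_, ⟨?_, fun r hr => ?_⟩,
    ⟨?_, fun c hc => ?_⟩⟩
  · simp only [hmem, hw.symm.2] at h
    have := hw.symm.apply_mem_window (i := A) (by omega)
    by_contra hle
    have := hw.symm_eq_neg_iff A (|d| + 1)
    omega
  · rw [hmem, hw.symm.2, symm_apply_apply]
    omega
  · rw [hmem] at hr
    omega
  · simp only [pmCompl, Set.mem_ofPred_eq, hmem, neg_neg]
    omega
  · simp only [pmCompl, Set.mem_ofPred_eq, hmem] at hc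
    omega

theorem RsetD_spec (hw : IsSignedPerm n w) (hd : IsDescentD n w d) :
    invSetOfTail n (RsetD n w d) ⊆ invSetD n w ∧
      ((IsLeast (RsetD n w d) (w (|d| + 1)) ∧ IsGreatest (pmCompl n (RsetD n w d)) (w d)) ∨
        (IsLeast (RsetD n w d) (-w d) ∧ IsGreatest (pmCompl n (RsetD n w d)) (-w (|d| + 1)))) := by
  by_cases hA : w d + w (|d| + 1) < 0 ∧ w '' Set.Icc 1 |d| ⊆ pmSet (nzIcc (w d) n)
  · have hd0 : d ≠ 0 := by have := hd.abs_cases; omega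
    rcases lt_or_gt_of_ne (apply_ne_zero_of_odd hw.2 hd0) with ha | ha
    · obtain ⟨h, h'⟩ := RsetD_spec_caseA_neg hw hd hA.1 ha
      exact ⟨h, Or.inr h'⟩
    · obtain ⟨h, h'⟩ := RsetD_spec_caseA_pos hw hd hA.2 hA.1 ha
      exact ⟨h, Or.inr h'⟩
  · rcases lt_or_gt_of_ne (hd.add_ne_zero hw.2) with hab | hab
    · obtain ⟨h, h'⟩ := RsetD_spec_caseB_neg hw hd hA hab
      exact ⟨h, Or.inl h'⟩
    · obtain ⟨h, h'⟩ := RsetD_spec_caseB_pos hw hd hA hab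
      exact ⟨h, Or.inl h'⟩

end RsetD

theorem wd_properties_D_general (n : ℕ) (w : Equiv.Perm ℤ) (hw : IsDPerm n w)
    (d : ℤ) (hd : IsDescentD n w d)
    (u : Equiv.Perm ℤ) (hu : IsDPerm n u)
    (l : ℤ) (hl : IsDescentD n u l) (hl' : ∀ l', IsDescentD n u l' → l' = l)
    (hR : ⇑u '' Set.Icc (|l| + 1) (n : ℤ) = RsetD n w d) :
    invSetD n u ⊆ invSetD n w ∧
    u * simpleD l * u⁻¹ = w * simpleD d * w⁻¹ := by
  have hu' := hu.isSignedPerm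
  have hw' := hw.isSignedPerm
  obtain ⟨hinv, hext⟩ := RsetD_spec hw' hd
  rw [← hR] at hinv hext
  have hleast := isLeast_tail hu' hl hl'
  have hgreatest := isGreatest_pmCompl_tail hu' hl hl'
  refine ⟨(invSetD_subset_invSetOfTail hu' hl hl').trans hinv, ?_⟩
  rw [conj_simpleD hu'.2 (hl.1.imp_right And.left), conj_simpleD hw'.2 (hd.1.imp_right And.left)]
  rcases hext with ⟨hb, ha⟩ | ⟨hb, ha⟩
  · rw [hgreatest.unique ha, hleast.unique hb]
  · have hd0 : d ≠ 0 := by have := hd.abs_cases; omega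
    rw [hgreatest.unique ha, hleast.unique hb, neg_neg, neg_neg, swap_comm (-w (|d| + 1)),
      swap_comm (w (|d| + 1))]
    exact (commute_swap_swap_neg (apply_ne_zero_of_odd hw'.2 hd0)
      (apply_ne_zero_of_odd hw'.2 (by positivity))).eq.symm

/-- Let `w ∈ W(D_n)`, let `d` be a descent of `w`, let `R_d` be the set attached to `d` as in
the type `D_n` canonical join decomposition, and let `w_d` (denoted `u`) be the unique
join-irreducible element of `W(D_n)` with `R(w_d) = R_d`, of type `l_d` (denoted `l`).  Then:
(1) `inv(w_d) ⊆ inv(w)`, i.e. `w_d ≤ w` in the right weak order; and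
(2) `w_d s_{l_d} w_d⁻¹ = w s_d w⁻¹`. -/
theorem wd_properties_D (n : ℕ) (hn : 4 ≤ n) (w : Equiv.Perm ℤ) (hw : IsDPerm n w)
    (d : ℤ) (hd : IsDescentD n w d)
    (u : Equiv.Perm ℤ) (hu : IsDPerm n u) (hji : IsJoinIrreducibleD n u)
    (l : ℤ) (hl : IsDescentD n u l) (hl' : ∀ l', IsDescentD n u l' → l' = l)
    (hR : ⇑u '' Set.Icc (|l| + 1) (n : ℤ) = RsetD n w d) :
    invSetD n u ⊆ invSetD n w ∧
    u * simpleD l * u⁻¹ = w * simpleD d * w⁻¹ :=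
  wd_properties_D_general n w hw d hd u hu l hl hl' hR
end

section
/- Let w ∈ W(D_n) have exactly one descent, at l with |l| = 1 (i.e., l ∈ {1, −1}). Set a = w(l), b = w(2), and c = (−1)^{|w⁻¹(1)|} · l, where w⁻¹(1) ∈ {±1,…,±n} is the preimage of 1 under w. Put V₊ = {c} ∪ {2,…,a−1} and V₋ = ∅ if b ∈ {1,−1}, and V₊ = {c} ∪ {2,…,a−1} and V₋ = {b+1,…,−2} ∪ {−c} if b ≤ −2. Define Γ(w) = {(i,j) : i, j ∈ {−1} ∪ {1,…,n−1}, i ≤ j, j ≠ −l, i ≠ (−1)^j l, and w(|j|+1) ≤ i}, and for (i,j) ∈ Γ(w) set k(i,j) = min{x ≥ 1 : |j| + x ≥ n or w(|j|+x+1) > |i|}; let Γ₁(w) = {(i,j) ∈ Γ(w) : k(i,j) = 1} and Γ₂(w) = {(i,j) ∈ Γ(w) : k(i,j) = 2}. Then: (1) the map (i,j) ↦ i is a bijection from Γ₁(w) onto V₊; and (2) the map sending (i,j) to i if |i| = 1 and to −i if |i| ≥ 2 is a bijection from Γ₂(w) onto V₋. -/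
/-- The index set `Q₀ = {−1} ∪ {1,…,n−1}`. -/
def QzeroD (n : ℕ) : Set ℤ := {-1} ∪ Set.Icc 1 ((n : ℤ) - 1)

/-- `Γ(w) = {(i,j) : i,j ∈ {−1} ∪ {1,…,n−1}, i ≤ j, j ≠ −l, i ≠ (−1)ʲ l, w(|j|+1) ≤ i}`,
for `w ∈ W(D_n)` with unique descent `l`, `|l| = 1`. -/
def GammaD1 (n : ℕ) (w : Equiv.Perm ℤ) (l : ℤ) : Set (ℤ × ℤ) :=
  {p | p.1 ∈ QzeroD n ∧ p.2 ∈ QzeroD n ∧ p.1 ≤ p.2 ∧ p.2 ≠ -l ∧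
    p.1 ≠ (-1 : ℤ) ^ p.2.natAbs * l ∧ w (|p.2| + 1) ≤ p.1}

/-- For `(i,j)`, the condition defining `k(i,j) ≤ x` pointwise: `|j| + x ≥ n` or
`w(|j|+x+1) > |i|`. -/
def kCondD1 (n : ℕ) (w : Equiv.Perm ℤ) (p : ℤ × ℤ) (x : ℤ) : Prop :=
  (n : ℤ) ≤ |p.2| + x ∨ |p.1| < w (|p.2| + x + 1)

/-- `Γ₁(w) = {(i,j) ∈ Γ(w) : k(i,j) = 1}` where
`k(i,j) = min{x ≥ 1 : |j|+x ≥ n or w(|j|+x+1) > |i|}`. -/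
def GammaOneD1 (n : ℕ) (w : Equiv.Perm ℤ) (l : ℤ) : Set (ℤ × ℤ) :=
  {p ∈ GammaD1 n w l | kCondD1 n w p 1}

/-- `Γ₂(w) = {(i,j) ∈ Γ(w) : k(i,j) = 2}`. -/
def GammaTwoD1 (n : ℕ) (w : Equiv.Perm ℤ) (l : ℤ) : Set (ℤ × ℤ) :=
  {p ∈ GammaD1 n w l | ¬ kCondD1 n w p 1 ∧ kCondD1 n w p 2}

/-!
A unique descent at `l = ±1` means that `w` increases along `2, …, n` and `w(-l) < w(2) < w(l)`.
Let `p = |w⁻¹(1)|`. Then `w ≤ -2` on `2, …, p - 1` and `w ≥ 2` on `p + 1, …, n`, so the number of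
negative values of `w` on `1, …, n` is `p - 2 + [w(p) = -1] + [l = -1]`; its evenness gives
`w(p) = (-1)^p l = c`.

For `(i,j) ∈ Γ(w)` the index `j` is determined by `|j|`, and `k(i,j) = 1` (resp. `2`) says that
`y = |j| + 1` (resp. `|j| + 2`) satisfies `w(y) ≤ |i|` and `y = n` or `|i| < w(y + 1)`; by
monotonicity `y` is determined by `i`. If `|i| = 1` then `y = p`, and the sign condition
`i ≠ (-1)^j l` forces `i = c` (resp. `i = -c`). If `i ≥ 2` then `y > i` (resp. `y > i + 1`), so the
positions `1, …, y` (resp. `2, …, y`) cannot all carry values of absolute value at most `i`, as `|w|`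
is injective on `1, …, n`; this forces `i < a` (resp. `b < -i`). Conversely, for `v` in `V₊` or `V₋`
the last position `y` with `w(y) ≤ |v|` yields the preimage, the same counting showing that `y` is
large enough.
-/

open Finset

theorem le_of_lt_apply_add_one_of_apply_le {f : ℤ → ℤ} {a b t y y' : ℤ}
    (hf : MonotoneOn f (Set.Icc a b)) (hy : a ≤ y) (hy' : y' ≤ b)
    (hcut : b ≤ y ∨ t < f (y + 1)) (h : f y' ≤ t) : y' ≤ y := by
  by_contra! hlt
  have : f (y + 1) ≤ f y' := hf ⟨by omega, by omega⟩ ⟨by omega, hy'⟩ (by omega)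
  omega

theorem exists_max_apply_le {f : ℤ → ℤ} {a b t : ℤ} (hab : a ≤ b) (ha : f a ≤ t) :
    ∃ y, a ≤ y ∧ y ≤ b ∧ f y ≤ t ∧ ∀ x, y < x → x ≤ b → t < f x := by
  obtain ⟨y, ⟨hay, hyb, hy⟩, hmax⟩ := Int.exists_greatest_of_bdd
    (P := fun y => a ≤ y ∧ y ≤ b ∧ f y ≤ t) ⟨b, fun z hz => hz.2.1⟩ ⟨a, le_rfl, hab, ha⟩
  refine ⟨y, hay, hyb, hy, fun x hyx hxb => ?_⟩
  by_contra! hx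
  have := hmax x ⟨by omega, hxb, hx⟩
  omega

def onePos (w : Equiv.Perm ℤ) : ℕ := (w.symm 1).natAbs

namespace IsDPerm

variable {n : ℕ} {w : Equiv.Perm ℤ}

theorem abs_apply_mem (hw : IsDPerm n w) {x : ℤ} (hx : 1 ≤ |x| ∧ |x| ≤ n) :
    1 ≤ |w x| ∧ |w x| ≤ n := by
  by_contra h
  rw [w.injective (hw.1 _ h)] at h
  exact h hx

theorem abs_apply_mem_of_mem (hw : IsDPerm n w) {x : ℤ} (hx : 1 ≤ x ∧ x ≤ n) :
    1 ≤ |w x| ∧ |w x| ≤ n :=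
  hw.abs_apply_mem (by rwa [abs_of_pos (by omega)])

theorem injOn_abs_apply (hw : IsDPerm n w) : Set.InjOn (fun x => |w x|) (Set.Icc 1 n) := by
  intro x hx y hy hxy
  rcases abs_eq_abs.mp hxy with h | h
  · exact w.injective h
  · have := w.injective (h.trans (hw.2.1 y).symm)
    simp only [Set.mem_Icc] at hx hy
    omega

theorem card_le_of_abs_apply_mem (hw : IsDPerm n w) {S T : Finset ℤ}
    (hS : ∀ x ∈ S, 1 ≤ x ∧ x ≤ n) (hST : ∀ x ∈ S, |w x| ∈ T) : #S ≤ #T :=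
  card_le_card_of_injOn _ hST (hw.injOn_abs_apply.mono hS)

theorem card_le_of_abs_apply_le (hw : IsDPerm n w) {S : Finset ℤ} {t : ℤ} (ht : 0 ≤ t)
    (hS : ∀ x ∈ S, 1 ≤ x ∧ x ≤ n) (hST : ∀ x ∈ S, |w x| ≤ t) : (#S : ℤ) ≤ t := by
  have := hw.card_le_of_abs_apply_mem (T := Icc 1 t) hS fun x hx =>
    mem_Icc.mpr ⟨(hw.abs_apply_mem_of_mem (hS x hx)).1, hST x hx⟩
  rw [Int.card_Icc] at this
  omega

theorem card_le_of_lt_abs_apply (hw : IsDPerm n w) {S : Finset ℤ} {t : ℤ} (ht : t ≤ n)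
    (hS : ∀ x ∈ S, 1 ≤ x ∧ x ≤ n) (hST : ∀ x ∈ S, t < |w x|) : (#S : ℤ) ≤ n - t := by
  have := hw.card_le_of_abs_apply_mem (T := Icc (t + 1) n) hS fun x hx =>
    mem_Icc.mpr ⟨hST x hx, (hw.abs_apply_mem_of_mem (hS x hx)).2⟩
  rw [Int.card_Icc] at this
  omega

theorem onePos_mem (hw : IsDPerm n w) (hn : 1 ≤ n) : 1 ≤ (onePos w : ℤ) ∧ (onePos w : ℤ) ≤ n := by
  rw [onePos, Int.natCast_natAbs]
  by_contra h
  have h1 : w.symm 1 = 1 := by simpa using (hw.1 _ h).symm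
  simp [h1] at h
  omega

theorem abs_apply_onePos (hw : IsDPerm n w) : |w (onePos w)| = 1 := by
  rw [onePos, Int.natCast_natAbs]
  rcases abs_choice (w.symm 1) with h | h <;> simp [h, hw.2.1]

theorem apply_onePos_eq_one_or (hw : IsDPerm n w) : w (onePos w) = 1 ∨ w (onePos w) = -1 :=
  (abs_eq zero_le_one).mp hw.abs_apply_onePos

theorem eq_onePos_of_abs_apply (hw : IsDPerm n w) (hn : 1 ≤ n) {x : ℤ} (hx : 1 ≤ x ∧ x ≤ n)
    (h : |w x| = 1) : x = onePos w :=
  hw.injOn_abs_apply hx (hw.onePos_mem hn) (h.trans hw.abs_apply_onePos.symm)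

theorem two_le_of_apply_lt {l : ℤ} (hw : IsDPerm n w) (hl : |l| = 1) (h : w 2 < w l) :
    2 ≤ (n : ℤ) := by
  by_contra hn
  have h2 : w 2 = 2 := hw.1 2 (by norm_num; omega)
  by_cases hn1 : (1 : ℤ) ≤ n
  · have := (hw.abs_apply_mem (x := l) (by omega)).2
    have := le_abs_self (w l)
    omega
  · have := hw.1 l (by omega)
    have := le_abs_self l
    omega

end IsDPerm

/-- Equivalently, `l = ±1` is the only descent of `w ∈ W(D_n)`. -/
structure HasUniqueUnitDescent (n : ℕ) (w : Equiv.Perm ℤ) (l : ℤ) : Prop where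
  isDPerm : IsDPerm n w
  abs_eq_one : |l| = 1
  strictMonoOn : StrictMonoOn w (Set.Icc 2 n)
  apply_two_lt : w 2 < w l
  neg_lt_apply_two : -w l < w 2

namespace HasUniqueUnitDescent

variable {n : ℕ} {w : Equiv.Perm ℤ} {l : ℤ}

theorem of_isDescentD (hw : IsDPerm n w) (hl : IsDescentD n w l)
    (hl' : ∀ l', IsDescentD n w l' → l' = l) (hl1 : |l| = 1) : HasUniqueUnitDescent n w l := by
  have hlt : w 2 < w l := by simpa [hl1, one_add_one_eq_two] using hl.2
  have hn := hw.two_le_of_apply_lt hl1 hlt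
  have hl01 : l = 1 ∨ l = -1 := (abs_eq zero_le_one).mp hl1
  have no_descent : ∀ x, (x = -1 ∨ (1 ≤ x ∧ x ≤ (n : ℤ) - 1)) → x ≠ l → w x ≤ w (|x| + 1) :=
    fun x hx hxl => not_lt.mp fun h => hxl (hl' x ⟨hx, h⟩)
  refine ⟨hw, hl1, strictMonoOn_of_lt_add_one Set.ordConnected_Icc fun x _ hx hx1 => ?_, hlt, ?_⟩
  · simp only [Set.mem_Icc] at hx hx1
    have h := no_descent x (by omega) (by omega)
    rw [abs_of_pos (by omega)] at h
    exact h.lt_of_ne fun h' => by have := w.injective h'; omega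
  · have h := no_descent (-l) (by omega) (by omega)
    rw [abs_neg, hl1, one_add_one_eq_two, hw.2.1] at h
    exact h.lt_of_ne fun h' => by
      have := w.injective ((hw.2.1 l).trans h')
      omega

variable (h : HasUniqueUnitDescent n w l)
include h

theorem two_le : 2 ≤ (n : ℤ) :=
  h.isDPerm.two_le_of_apply_lt h.abs_eq_one h.apply_two_lt

theorem apply_one : w 1 = l * w l := by
  rcases (abs_eq zero_le_one).mp h.abs_eq_one with rfl | rfl
  · simp
  · simp [h.isDPerm.2.1]

theorem two_le_apply : 2 ≤ w l := by
  have := (h.isDPerm.abs_apply_mem_of_mem (x := 2) ⟨by norm_num, h.two_le⟩).1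
  have := h.apply_two_lt
  have := h.neg_lt_apply_two
  rcases abs_cases (w 2) with ⟨_, _⟩ | ⟨_, _⟩ <;> omega

theorem abs_apply_one : |w 1| = w l := by
  rw [h.apply_one, abs_mul, h.abs_eq_one, one_mul, abs_of_pos (by linarith [h.two_le_apply])]

theorem apply_le : w l ≤ n := by
  rw [← h.abs_apply_one]
  exact (h.isDPerm.abs_apply_mem_of_mem ⟨le_rfl, by linarith [h.two_le]⟩).2

theorem two_le_onePos : 2 ≤ (onePos w : ℤ) := by
  have hp := h.isDPerm.onePos_mem (by linarith [h.two_le])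
  by_contra hp2
  have h1 : (onePos w : ℤ) = 1 := by omega
  have := h.isDPerm.abs_apply_onePos
  rw [h1, h.abs_apply_one] at this
  linarith [h.two_le_apply]

theorem onePos_le : (onePos w : ℤ) ≤ n :=
  (h.isDPerm.onePos_mem (by linarith [h.two_le])).2

theorem two_le_abs_apply {x : ℤ} (hx : 1 ≤ x ∧ x ≤ n) (hxp : x ≠ onePos w) : 2 ≤ |w x| := by
  have := (h.isDPerm.abs_apply_mem_of_mem hx).1
  have := mt (h.isDPerm.eq_onePos_of_abs_apply (by linarith [h.two_le]) hx) hxp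
  omega

theorem two_le_apply_of_onePos_lt {x : ℤ} (hpx : onePos w < x) (hxn : x ≤ n) : 2 ≤ w x := by
  have := h.two_le_abs_apply (x := x) ⟨by linarith [h.two_le_onePos], hxn⟩ hpx.ne'
  have := h.strictMonoOn ⟨h.two_le_onePos, h.onePos_le⟩ ⟨by linarith [h.two_le_onePos], hxn⟩ hpx
  have := h.isDPerm.apply_onePos_eq_one_or
  rcases abs_cases (w x) with ⟨_, _⟩ | ⟨_, _⟩ <;> omega

theorem apply_le_neg_two_of_lt_onePos {x : ℤ} (hx : 2 ≤ x) (hxp : x < onePos w) : w x ≤ -2 := by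
  have := h.two_le_abs_apply (x := x) ⟨by omega, by linarith [h.onePos_le]⟩ hxp.ne
  have := h.strictMonoOn ⟨hx, by linarith [h.onePos_le]⟩ ⟨h.two_le_onePos, h.onePos_le⟩ hxp
  have := h.isDPerm.apply_onePos_eq_one_or
  rcases abs_cases (w x) with ⟨_, _⟩ | ⟨_, _⟩ <;> omega

theorem eq_onePos_of_apply_le_one {y : ℤ} (hy : 2 ≤ y) (hyn : y ≤ n) (hle : w y ≤ 1)
    (hcut : n ≤ y ∨ 1 < w (y + 1)) : y = onePos w := by
  have hp := h.two_le_onePos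
  have hpn := h.onePos_le
  have hp1 := h.isDPerm.apply_onePos_eq_one_or
  rcases lt_trichotomy y (onePos w) with hyp | hyp | hyp
  · rcases (show y + 1 ≤ onePos w by omega).eq_or_lt with hyp' | hyp'
    · rw [hyp'] at hcut
      omega
    · have := h.apply_le_neg_two_of_lt_onePos (by omega) hyp'
      omega
  · exact hyp
  · have := h.two_le_apply_of_onePos_lt hyp hyn
    omega

theorem apply_two_le_neg_two_iff : w 2 ≤ -2 ↔ 3 ≤ (onePos w : ℤ) := by
  constructor
  · intro h2
    by_contra hp
    have hp2 : (onePos w : ℤ) = 2 := by linarith [h.two_le_onePos]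
    have := h.isDPerm.apply_onePos_eq_one_or
    rw [hp2] at this
    omega
  · exact fun hp => h.apply_le_neg_two_of_lt_onePos le_rfl (by omega)

/-- The negative values of `w` on `1, …, n` sit at `1` (iff `l = -1`), at `2, …, p - 1`, and at
`p = onePos w` (iff `w p = -1`). -/
theorem card_filter_apply_neg :
    (#((Icc (1 : ℤ) n).filter fun i => w i < 0) : ℤ) * 2 = 2 * onePos w - 2 - l - w (onePos w) := by
  have hp := h.two_le_onePos
  have hp1 := h.isDPerm.apply_onePos_eq_one_or
  have hwl := h.two_le_apply
  have hw1 : (l = 1 ∧ 0 < w 1) ∨ (l = -1 ∧ w 1 < 0) := by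
    rcases (abs_eq zero_le_one).mp h.abs_eq_one with hl | hl <;>
      rw [h.apply_one, hl] <;> simp only [hl] at hwl <;> omega
  obtain ⟨lo, hlo⟩ : ∃ lo : ℤ, 2 * lo = 3 + l := ⟨(3 + l) / 2, by omega⟩
  obtain ⟨hi, hhi⟩ : ∃ hi : ℤ, 2 * hi = 2 * onePos w - 1 - w (onePos w) :=
    ⟨(2 * onePos w - 1 - w (onePos w)) / 2, by omega⟩
  have hneg : ((Icc (1 : ℤ) n).filter fun i => w i < 0) = Icc lo hi := by
    ext x
    rw [mem_filter, mem_Icc, mem_Icc]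
    have := h.onePos_le
    rcases lt_trichotomy x 1 with hx1 | rfl | hx1
    · omega
    · omega
    rcases lt_trichotomy x (onePos w) with hxp | rfl | hxp
    · have := h.apply_le_neg_two_of_lt_onePos hx1 hxp
      omega
    · omega
    · by_cases hxn : x ≤ n
      · have := h.two_le_apply_of_onePos_lt hxp hxn
        omega
      · omega
  rw [hneg, Int.card_Icc]
  omega

theorem apply_onePos : w (onePos w) = (-1) ^ onePos w * l := by
  have hcard := h.card_filter_apply_neg
  obtain ⟨r, hr⟩ := h.isDPerm.2.2
  rw [hr] at hcard
  have hp1 := h.isDPerm.apply_onePos_eq_one_or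
  have hl := (abs_eq zero_le_one).mp h.abs_eq_one
  rcases Nat.even_or_odd (onePos w) with hpar | hpar
  · rw [hpar.neg_one_pow, one_mul]
    obtain ⟨k, hk⟩ := hpar
    omega
  · rw [hpar.neg_one_pow]
    obtain ⟨k, hk⟩ := hpar
    omega

theorem neg_one_pow_mul_eq {J k : ℕ} (hJ : J + k = onePos w) :
    (-1) ^ J * l = (-1) ^ k * w (onePos w) := by
  have hk : ((-1 : ℤ) ^ k) ^ 2 = 1 := by rw [← pow_mul, pow_mul', neg_one_sq, one_pow]
  rw [h.apply_onePos, ← hJ, pow_add]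
  linear_combination (-((-1 : ℤ) ^ J * l)) * hk

end HasUniqueUnitDescent

namespace QzeroD

variable {n : ℕ} {i j j' l : ℤ}

theorem abs_eq_one_or_two_le (hi : i ∈ QzeroD n) : |i| = 1 ∨ 2 ≤ i := by
  rcases hi with rfl | ⟨hi, -⟩
  · simp
  · rcases hi.eq_or_lt with rfl | hi
    · simp
    · omega

theorem abs_mem (hn : 2 ≤ (n : ℤ)) (hj : j ∈ QzeroD n) : 1 ≤ |j| ∧ |j| ≤ n - 1 := by
  rcases hj with rfl | ⟨hj, hjn⟩
  · simp only [abs_neg, abs_one]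
    omega
  · rw [abs_of_pos (by omega)]
    exact ⟨hj, hjn⟩

theorem eq_of_abs_eq (hl : |l| = 1) (hj : j ∈ QzeroD n) (hj' : j' ∈ QzeroD n)
    (hjl : j ≠ -l) (hjl' : j' ≠ -l) (h : |j| = |j'|) : j = j' := by
  have hl' := (abs_eq zero_le_one).mp hl
  rcases hj with rfl | ⟨hj, -⟩ <;> rcases hj' with rfl | ⟨hj', -⟩
  · rfl
  · rw [abs_neg, abs_one, abs_of_pos (by omega)] at h
    omega
  · rw [abs_neg, abs_one, abs_of_pos (by omega)] at h
    omega
  · rwa [abs_of_pos (by omega), abs_of_pos (by omega)] at h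

theorem injOn_ite_abs_eq_one : Set.InjOn (fun i : ℤ => if |i| = 1 then i else -i) (QzeroD n) := by
  intro i hi i' hi' h
  simp only at h
  rcases abs_eq_one_or_two_le hi with hi1 | hi2 <;> rcases abs_eq_one_or_two_le hi' with hi1' | hi2'
  · simpa [hi1, hi1'] using h
  · rw [if_pos hi1, if_neg (by rw [abs_of_pos (by omega)]; omega)] at h
    rcases abs_cases i with ⟨_, _⟩ | ⟨_, _⟩ <;> omega
  · rw [if_pos hi1', if_neg (by rw [abs_of_pos (by omega)]; omega)] at h
    rcases abs_cases i' with ⟨_, _⟩ | ⟨_, _⟩ <;> omega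
  · rw [if_neg (by rw [abs_of_pos (by omega)]; omega),
      if_neg (by rw [abs_of_pos (by omega)]; omega)] at h
    omega

end QzeroD

section Gamma

variable {n : ℕ} {w : Equiv.Perm ℤ} {l : ℤ}

theorem mem_gammaD1_of_two_le (hl : |l| = 1) {i j : ℤ} (hi : 2 ≤ i) (hij : i ≤ j)
    (hjn : j ≤ n - 1) (hw : w (j + 1) ≤ i) : (i, j) ∈ GammaD1 n w l := by
  have hpow : |(-1 : ℤ) ^ j.natAbs * l| = 1 := by simp [abs_mul, hl]
  have hl' := (abs_eq zero_le_one).mp hl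
  refine ⟨.inr ⟨by omega, by omega⟩, .inr ⟨by omega, hjn⟩, hij, by omega, ?_, ?_⟩
  · intro hcon
    have : |i| = 1 := by rw [show i = _ from hcon]; exact hpow
    rw [abs_of_pos (by omega)] at this
    omega
  · rwa [abs_of_pos (by omega)]

theorem exists_mem_gammaD1_of_abs_eq_one (hl : |l| = 1) {i : ℤ} {J : ℕ} (hi : |i| = 1)
    (hJ : 1 ≤ J) (hJn : (J : ℤ) ≤ n - 1) (hpar : i ≠ (-1) ^ J * l) (hw : w (J + 1) ≤ i) :
    ∃ j : ℤ, |j| = J ∧ (i, j) ∈ GammaD1 n w l := by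
  have hl' := (abs_eq zero_le_one).mp hl
  have hi' := (abs_eq zero_le_one).mp hi
  have hiQ : i ∈ QzeroD n := by
    rcases hi' with rfl | rfl
    exacts [.inr ⟨le_rfl, by omega⟩, .inl rfl]
  rcases hJ.eq_or_lt with rfl | hJ
  · refine ⟨l, by rw [hl, Nat.cast_one], ?_⟩
    have hil : i = l := by
      rw [pow_one] at hpar
      rcases hi' with rfl | rfl <;> rcases hl' with rfl | rfl <;> simp_all
    subst hil
    refine ⟨hiQ, hiQ, le_rfl, by omega, ?_, ?_⟩
    · rw [← Int.natCast_natAbs, Nat.cast_eq_one] at hi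
      rw [hi, pow_one]
      omega
    · rw [hi]
      exact_mod_cast hw
  · refine ⟨J, abs_of_nonneg (by omega), ?_⟩
    refine ⟨hiQ, .inr ⟨by omega, hJn⟩, by omega, by omega, by simpa using hpar, ?_⟩
    rw [abs_of_nonneg (by omega)]
    exact hw

end Gamma

namespace HasUniqueUnitDescent

variable {n : ℕ} {w : Equiv.Perm ℤ} {l : ℤ} (h : HasUniqueUnitDescent n w l)
include h

theorem apply_two_le_one : w 2 ≤ 1 := by
  rcases h.two_le_onePos.eq_or_lt with hp | hp
  · have := h.isDPerm.apply_onePos_eq_one_or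
    rw [← hp] at this
    omega
  · linarith [h.apply_le_neg_two_of_lt_onePos le_rfl hp]

theorem abs_apply_le {x y t : ℤ} (hx : 2 ≤ x) (hxy : x ≤ y) (hyn : y ≤ n) (hwy : w y ≤ t)
    (ht : -t ≤ w 2) : |w x| ≤ t := by
  have hmono := h.strictMonoOn.monotoneOn
  have h2x : w 2 ≤ w x := hmono ⟨le_rfl, by omega⟩ ⟨hx, by omega⟩ hx
  have hxy' : w x ≤ w y := hmono ⟨hx, by omega⟩ ⟨by omega, hyn⟩ hxy
  exact abs_le.mpr ⟨by omega, by omega⟩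

theorem lt_apply_of_mem_gammaOneD1 {i j : ℤ} (hq : (i, j) ∈ GammaOneD1 n w l) (hi : 2 ≤ i) :
    i < w l := by
  obtain ⟨⟨-, hj, hij, -, -, hwj⟩, -⟩ := hq
  dsimp only at hj hij hwj
  have hjn := QzeroD.abs_mem h.two_le hj
  have hj' : |j| = j := abs_of_pos (by omega)
  by_contra! hai
  have := h.isDPerm.card_le_of_abs_apply_le (S := Icc 1 (|j| + 1)) (t := i) (by omega)
    (fun x hx => by rw [mem_Icc] at hx; omega) fun x hx => by
      rw [mem_Icc] at hx
      rcases hx.1.eq_or_lt with rfl | hx1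
      · rwa [h.abs_apply_one]
      · exact h.abs_apply_le hx1 hx.2 (by omega) hwj (by linarith [h.neg_lt_apply_two])
  rw [Int.card_Icc] at this
  omega

theorem apply_two_lt_neg_of_mem_gammaTwoD1 {i j : ℤ} (hq : (i, j) ∈ GammaTwoD1 n w l)
    (hi : 2 ≤ i) : w 2 < -i := by
  obtain ⟨⟨-, hj, hij, -, -, -⟩, hk1, -⟩ := hq
  dsimp only at hj hij
  simp only [kCondD1, not_or, not_lt, abs_of_pos (by omega : 0 < i)] at hk1
  have hjn := QzeroD.abs_mem h.two_le hj
  have hj' : |j| = j := abs_of_pos (by omega)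
  by_contra! hbi
  have := h.isDPerm.card_le_of_abs_apply_le (S := Icc 2 (|j| + 1 + 1)) (t := i) (by omega)
    (fun x hx => by rw [mem_Icc] at hx; omega) fun x hx => by
      rw [mem_Icc] at hx
      exact h.abs_apply_le hx.1 hx.2 (by omega) hk1.2 hbi
  rw [Int.card_Icc] at this
  omega

theorem eq_apply_onePos_of_mem_gammaOneD1 {i j : ℤ} (hq : (i, j) ∈ GammaOneD1 n w l)
    (hi : |i| = 1) : i = w (onePos w) := by
  obtain ⟨⟨-, hj, -, -, hpar, hwj⟩, hk⟩ := hq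
  dsimp only at hj hpar hwj
  have hjn := QzeroD.abs_mem h.two_le hj
  have hk : (n : ℤ) ≤ |j| + 1 ∨ 1 < w (|j| + 1 + 1) := by simpa only [kCondD1, hi] using hk
  have hy := h.eq_onePos_of_apply_le_one (by omega) (by omega) (hwj.trans (hi ▸ le_abs_self i)) hk
  have hJ : j.natAbs + 1 = onePos w := by have := Int.natCast_natAbs j; omega
  rw [h.neg_one_pow_mul_eq hJ, pow_one, neg_one_mul] at hpar
  have := h.isDPerm.apply_onePos_eq_one_or
  have := (abs_eq zero_le_one).mp hi
  omega

theorem eq_neg_apply_onePos_of_mem_gammaTwoD1 {i j : ℤ} (hq : (i, j) ∈ GammaTwoD1 n w l)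
    (hi : |i| = 1) : 3 ≤ (onePos w : ℤ) ∧ i = -w (onePos w) := by
  obtain ⟨⟨-, hj, -, -, hpar, -⟩, hk1, hk2⟩ := hq
  dsimp only at hj hpar
  simp only [kCondD1, not_or, not_lt, hi] at hk1 hk2
  rw [add_assoc, one_add_one_eq_two] at hk1
  have hjn := QzeroD.abs_mem h.two_le hj
  have hy := h.eq_onePos_of_apply_le_one (by omega) (by omega) hk1.2 hk2
  have hJ : j.natAbs + 2 = onePos w := by have := Int.natCast_natAbs j; omega
  rw [h.neg_one_pow_mul_eq hJ, neg_one_sq, one_mul] at hpar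
  have := h.isDPerm.apply_onePos_eq_one_or
  have := (abs_eq zero_le_one).mp hi
  exact ⟨by omega, by omega⟩

theorem exists_mem_gammaOneD1_apply_onePos : ∃ j, (w (onePos w), j) ∈ GammaOneD1 n w l := by
  have hp := h.two_le_onePos
  have hpn := h.onePos_le
  have hp1 := h.isDPerm.apply_onePos_eq_one_or
  obtain ⟨J, hJ⟩ : ∃ J : ℕ, J + 1 = onePos w := ⟨onePos w - 1, by omega⟩
  have hpar := h.neg_one_pow_mul_eq hJ
  rw [pow_one, neg_one_mul] at hpar
  obtain ⟨j, hj, hΓ⟩ := exists_mem_gammaD1_of_abs_eq_one (n := n) (w := w) h.abs_eq_one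
    h.isDPerm.abs_apply_onePos (J := J) (by omega) (by omega) (by omega)
    (by rw [show (J : ℤ) + 1 = onePos w by omega])
  refine ⟨j, hΓ, ?_⟩
  show (n : ℤ) ≤ |j| + 1 ∨ |w (onePos w)| < w (|j| + 1 + 1)
  rw [hj, h.isDPerm.abs_apply_onePos]
  rcases hpn.eq_or_lt with hpn | hpn
  · exact .inl (by omega)
  · have := h.two_le_apply_of_onePos_lt (x := J + 1 + 1) (by omega) (by omega)
    exact .inr (by omega)

theorem exists_mem_gammaTwoD1_neg_apply_onePos (hp : 3 ≤ (onePos w : ℤ)) :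
    ∃ j, (-w (onePos w), j) ∈ GammaTwoD1 n w l := by
  have hpn := h.onePos_le
  have hp1 := h.isDPerm.apply_onePos_eq_one_or
  obtain ⟨J, hJ⟩ : ∃ J : ℕ, J + 2 = onePos w := ⟨onePos w - 2, by omega⟩
  have hpar := h.neg_one_pow_mul_eq hJ
  rw [neg_one_sq, one_mul] at hpar
  have hwJ := h.apply_le_neg_two_of_lt_onePos (x := J + 1) (by omega) (by omega)
  obtain ⟨j, hj, hΓ⟩ := exists_mem_gammaD1_of_abs_eq_one (n := n) (w := w) h.abs_eq_one
    (by rw [abs_neg, h.isDPerm.abs_apply_onePos]) (J := J) (by omega) (by omega) (by omega)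
    (by omega)
  refine ⟨j, hΓ, ?_, ?_⟩
  · show ¬((n : ℤ) ≤ |j| + 1 ∨ |-w (onePos w)| < w (|j| + 1 + 1))
    rw [hj, abs_neg, h.isDPerm.abs_apply_onePos, show (J : ℤ) + 1 + 1 = onePos w by omega]
    omega
  · show (n : ℤ) ≤ |j| + 2 ∨ |-w (onePos w)| < w (|j| + 2 + 1)
    rw [hj, abs_neg, h.isDPerm.abs_apply_onePos]
    rcases hpn.eq_or_lt with hpn | hpn
    · exact .inl (by omega)
    · have := h.two_le_apply_of_onePos_lt (x := J + 2 + 1) (by omega) (by omega)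
      exact .inr (by omega)

theorem exists_mem_gammaOneD1_of_two_le {i : ℤ} (hi : 2 ≤ i) (hil : i < w l) :
    ∃ j, (i, j) ∈ GammaOneD1 n w l := by
  have := h.apply_le
  obtain ⟨y, hy2, hyn, hwy, hgt⟩ :=
    exists_max_apply_le (f := w) (t := i) h.two_le (by linarith [h.apply_two_le_one])
  have hiy : i + 1 ≤ y := by
    have := h.isDPerm.card_le_of_lt_abs_apply (S := insert 1 (Icc (y + 1) n)) (t := i)
      (by omega) (fun x hx => by rw [mem_insert, mem_Icc] at hx; omega) fun x hx => by
        rcases mem_insert.mp hx with rfl | hx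
        · rwa [h.abs_apply_one]
        · rw [mem_Icc] at hx
          have := hgt x (by omega) hx.2
          rwa [abs_of_pos (by omega)]
    rw [card_insert_of_notMem (by rw [mem_Icc]; omega), Int.card_Icc] at this
    omega
  refine ⟨y - 1, mem_gammaD1_of_two_le h.abs_eq_one hi (by omega) (by omega)
    (by rwa [sub_add_cancel]), ?_⟩
  show (n : ℤ) ≤ |y - 1| + 1 ∨ |i| < w (|y - 1| + 1 + 1)
  rw [abs_of_pos (by omega : 0 < y - 1), abs_of_pos (by omega : 0 < i), sub_add_cancel]
  rcases hyn.eq_or_lt with hyn | hyn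
  · exact .inl (by omega)
  · exact .inr (hgt _ (by omega) (by omega))

theorem exists_mem_gammaTwoD1_of_two_le {i : ℤ} (hi : 2 ≤ i) (hi2 : w 2 < -i) :
    ∃ j, (i, j) ∈ GammaTwoD1 n w l := by
  have h2n := (h.isDPerm.abs_apply_mem_of_mem (x := 2) ⟨by norm_num, h.two_le⟩).2
  have h1 := h.abs_apply_one
  have := h.neg_lt_apply_two
  obtain ⟨y, hy2, hyn, hwy, hgt⟩ :=
    exists_max_apply_le (f := w) (t := i) h.two_le (by linarith [h.apply_two_le_one])
  have hiy : i + 2 ≤ y := by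
    have := h.isDPerm.card_le_of_lt_abs_apply (S := insert 1 (insert 2 (Icc (y + 1) n))) (t := i)
      (by rw [abs_of_neg (by omega)] at h2n; omega)
      (fun x hx => by simp only [mem_insert, mem_Icc] at hx; omega) fun x hx => by
        simp only [mem_insert, mem_Icc] at hx
        rcases hx with rfl | rfl | hx
        · omega
        · rw [abs_of_neg (by omega)]; omega
        · have := hgt x (by omega) hx.2
          rwa [abs_of_pos (by omega)]
    rw [card_insert_of_notMem (by simp only [mem_insert, mem_Icc]; omega),
      card_insert_of_notMem (by rw [mem_Icc]; omega), Int.card_Icc] at this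
    omega
  have hwy' : w (y - 1) < w y := h.strictMonoOn ⟨by omega, by omega⟩ ⟨hy2, hyn⟩ (by omega)
  refine ⟨y - 2, mem_gammaD1_of_two_le h.abs_eq_one hi (by omega) (by omega)
    (by rw [show y - 2 + 1 = y - 1 by ring]; omega), ?_, ?_⟩
  · show ¬((n : ℤ) ≤ |y - 2| + 1 ∨ |i| < w (|y - 2| + 1 + 1))
    rw [abs_of_pos (by omega : 0 < y - 2), abs_of_pos (by omega : 0 < i),
      show y - 2 + 1 + 1 = y by ring]
    omega
  · show (n : ℤ) ≤ |y - 2| + 2 ∨ |i| < w (|y - 2| + 2 + 1)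
    rw [abs_of_pos (by omega : 0 < y - 2), abs_of_pos (by omega : 0 < i),
      show y - 2 + 2 + 1 = y + 1 by ring]
    rcases hyn.eq_or_lt with hyn | hyn
    · exact .inl (by omega)
    · exact .inr (hgt _ (by omega) (by omega))

theorem mapsTo_gammaOneD1 :
    Set.MapsTo Prod.fst (GammaOneD1 n w l) ({w (onePos w)} ∪ Set.Icc 2 (w l - 1)) := by
  rintro ⟨i, j⟩ hq
  rcases QzeroD.abs_eq_one_or_two_le hq.1.1 with hi | hi
  · exact .inl (h.eq_apply_onePos_of_mem_gammaOneD1 hq hi)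
  · exact .inr ⟨hi, by linarith [h.lt_apply_of_mem_gammaOneD1 hq hi]⟩

theorem injOn_gammaOneD1 : Set.InjOn Prod.fst (GammaOneD1 n w l) := by
  have abs_le_abs : ∀ {i j j'}, (i, j) ∈ GammaOneD1 n w l → (i, j') ∈ GammaOneD1 n w l →
      |j'| ≤ |j| := by
    rintro i j j' ⟨⟨-, hj, -, -, -, -⟩, hk⟩ ⟨⟨-, hj', -, -, -, hwj'⟩, -⟩
    dsimp only at hj hj' hwj'
    have := QzeroD.abs_mem h.two_le hj
    have := QzeroD.abs_mem h.two_le hj'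
    have := le_of_lt_apply_add_one_of_apply_le h.strictMonoOn.monotoneOn (y := |j| + 1)
      (y' := |j'| + 1) (by omega) (by omega) hk (hwj'.trans (le_abs_self i))
    omega
  rintro ⟨i, j⟩ hq ⟨i', j'⟩ hq' (rfl : i = i')
  exact Prod.ext rfl (QzeroD.eq_of_abs_eq h.abs_eq_one hq.1.2.1 hq'.1.2.1 hq.1.2.2.2.1
    hq'.1.2.2.2.1 (le_antisymm (abs_le_abs hq' hq) (abs_le_abs hq hq')))

theorem surjOn_gammaOneD1 :
    Set.SurjOn Prod.fst (GammaOneD1 n w l) ({w (onePos w)} ∪ Set.Icc 2 (w l - 1)) := by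
  rintro i (rfl | ⟨hi, hil⟩)
  · obtain ⟨j, hj⟩ := h.exists_mem_gammaOneD1_apply_onePos
    exact ⟨_, hj, rfl⟩
  · obtain ⟨j, hj⟩ := h.exists_mem_gammaOneD1_of_two_le hi (by omega)
    exact ⟨_, hj, rfl⟩

theorem mapsTo_gammaTwoD1 :
    Set.MapsTo (fun q : ℤ × ℤ => if |q.1| = 1 then q.1 else -q.1) (GammaTwoD1 n w l)
      (if w 2 ≤ -2 then Set.Icc (w 2 + 1) (-2) ∪ {-w (onePos w)} else ∅) := by
  rintro ⟨i, j⟩ hq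
  rcases QzeroD.abs_eq_one_or_two_le hq.1.1 with hi | hi
  · obtain ⟨hp, rfl⟩ := h.eq_neg_apply_onePos_of_mem_gammaTwoD1 hq hi
    simp only [if_pos (h.apply_two_le_neg_two_iff.mpr hp), if_pos hi]
    exact .inr rfl
  · have := h.apply_two_lt_neg_of_mem_gammaTwoD1 hq hi
    simp only [if_pos (show w 2 ≤ -2 by omega),
      if_neg (show |i| ≠ 1 by rw [abs_of_pos (by omega)]; omega)]
    exact .inl ⟨by omega, by omega⟩

theorem injOn_gammaTwoD1 :
    Set.InjOn (fun q : ℤ × ℤ => if |q.1| = 1 then q.1 else -q.1) (GammaTwoD1 n w l) := by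
  have abs_le_abs : ∀ {i j j'}, (i, j) ∈ GammaTwoD1 n w l → (i, j') ∈ GammaTwoD1 n w l →
      |j'| ≤ |j| := by
    rintro i j j' ⟨⟨-, hj, -, -, -, -⟩, -, hk⟩ ⟨⟨-, hj', -, -, -, -⟩, hk', -⟩
    dsimp only at hj hj'
    simp only [kCondD1, not_or, not_lt] at hk hk'
    have := QzeroD.abs_mem h.two_le hj
    have := QzeroD.abs_mem h.two_le hj'
    have := le_of_lt_apply_add_one_of_apply_le h.strictMonoOn.monotoneOn (y := |j| + 2)
      (y' := |j'| + 1 + 1) (by omega) (by omega) hk hk'.2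
    omega
  rintro ⟨i, j⟩ hq ⟨i', j'⟩ hq' he
  obtain rfl : i = i' := QzeroD.injOn_ite_abs_eq_one hq.1.1 hq'.1.1 he
  exact Prod.ext rfl (QzeroD.eq_of_abs_eq h.abs_eq_one hq.1.2.1 hq'.1.2.1 hq.1.2.2.2.1
    hq'.1.2.2.2.1 (le_antisymm (abs_le_abs hq' hq) (abs_le_abs hq hq')))

theorem surjOn_gammaTwoD1 :
    Set.SurjOn (fun q : ℤ × ℤ => if |q.1| = 1 then q.1 else -q.1) (GammaTwoD1 n w l)
      (if w 2 ≤ -2 then Set.Icc (w 2 + 1) (-2) ∪ {-w (onePos w)} else ∅) := by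
  intro v hv
  split_ifs at hv with hb
  · rcases hv with ⟨hv1, hv2⟩ | rfl
    · obtain ⟨j, hj⟩ := h.exists_mem_gammaTwoD1_of_two_le (i := -v) (by omega) (by omega)
      refine ⟨_, hj, ?_⟩
      simp only [if_neg (show |-v| ≠ 1 by rw [abs_of_pos (by omega)]; omega), neg_neg]
    · obtain ⟨j, hj⟩ :=
        h.exists_mem_gammaTwoD1_neg_apply_onePos (h.apply_two_le_neg_two_iff.mp hb)
      refine ⟨_, hj, ?_⟩
      simp only [abs_neg, h.isDPerm.abs_apply_onePos, if_true]
  · exact absurd hv (Set.notMem_empty v)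

end HasUniqueUnitDescent

theorem gamma_bijections_D_typePM1_general (n : ℕ)
    (w : Equiv.Perm ℤ) (hw : IsDPerm n w)
    (l : ℤ) (hl : IsDescentD n w l) (hl' : ∀ l', IsDescentD n w l' → l' = l)
    (hl1 : |l| = 1)
    (a b c : ℤ) (ha : a = w l) (hb : b = w 2)
    (hc : c = (-1 : ℤ) ^ (w.symm 1).natAbs * l)
    (Vp Vm : Set ℤ)
    (hVp : Vp = {c} ∪ Set.Icc 2 (a - 1))
    (hVm : Vm = if b ≤ -2 then Set.Icc (b + 1) (-2) ∪ {-c} else (∅ : Set ℤ)) :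
    Set.BijOn Prod.fst (GammaOneD1 n w l) Vp ∧
    Set.BijOn (fun p : ℤ × ℤ => if |p.1| = 1 then p.1 else -p.1) (GammaTwoD1 n w l) Vm := by
  have h := HasUniqueUnitDescent.of_isDescentD hw hl hl' hl1
  have hc' : c = w (onePos w) := hc.trans h.apply_onePos.symm
  subst ha hb hc' hVp hVm
  exact ⟨⟨h.mapsTo_gammaOneD1, h.injOn_gammaOneD1, h.surjOn_gammaOneD1⟩,
    ⟨h.mapsTo_gammaTwoD1, h.injOn_gammaTwoD1, h.surjOn_gammaTwoD1⟩⟩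

/-- Let `w ∈ W(D_n)` have exactly one descent, at `l` with `|l| = 1`.  With `a = w(l)`,
`b = w(2)`, `c = (−1)^{|w⁻¹(1)|}·l`, `V₊ = {c} ∪ {2,…,a−1}` and `V₋ = ∅` if `b ∈ {1,−1}`,
`V₋ = {b+1,…,−2} ∪ {−c}` if `b ≤ −2`, we have:
(1) `(i,j) ↦ i` is a bijection from `Γ₁(w)` onto `V₊`; and
(2) `(i,j) ↦ i` (if `|i| = 1`), `(i,j) ↦ −i` (if `|i| ≥ 2`) is a bijection from `Γ₂(w)`
onto `V₋`. -/
theorem gamma_bijections_D_typePM1 (n : ℕ) (hn : 4 ≤ n)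
    (w : Equiv.Perm ℤ) (hw : IsDPerm n w)
    (l : ℤ) (hl : IsDescentD n w l) (hl' : ∀ l', IsDescentD n w l' → l' = l)
    (hl1 : |l| = 1)
    (a b c : ℤ) (ha : a = w l) (hb : b = w 2)
    (hc : c = (-1 : ℤ) ^ (w.symm 1).natAbs * l)
    (Vp Vm : Set ℤ)
    (hVp : Vp = {c} ∪ Set.Icc 2 (a - 1))
    (hVm : Vm = if b ≤ -2 then Set.Icc (b + 1) (-2) ∪ {-c} else (∅ : Set ℤ)) :
    Set.BijOn Prod.fst (GammaOneD1 n w l) Vp ∧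
    Set.BijOn (fun p : ℤ × ℤ => if |p.1| = 1 then p.1 else -p.1) (GammaTwoD1 n w l) Vm :=
  gamma_bijections_D_typePM1_general n w hw l hl hl' hl1 a b c ha hb hc Vp Vm hVp hVm
end
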